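/- arXiv:2511.15226 — 3 statements merged into one kernel-verified Lean document; each statement's English description precedes it below -/
import Mathlib

section
/- If (G, σ) is a signed graph with maximum degree at most 3 whose signature achieves the frustration index, then no two negative edges of (G, σ) share a common endpoint; consequently F(G, σ) ≤ v(G)/2, where v(G) is the number of vertices. -/
open scoped Classical

/-- The Boolean indicating whether an edge crosses the vertex set `X`. -/
noncomputable def sgnCross {V : Type*} (X : Set V) : Sym2 V → Bool :=
  Sym2.lift ⟨fun a b => xor (decide (a ∈ X)) (decide (b ∈ X)),
    fun a b => Bool.xor_comm _ _⟩

/-- The signature obtained from `σ` by switching at the edge-cut `[X, Xᶜ]`: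
the signs of all edges crossing `X` are flipped.  (`true` = negative.) -/
noncomputable def sgnSwitch {V : Type*} (σ : Sym2 V → Bool) (X : Set V) : Sym2 V → Bool :=
  fun e => xor (σ e) (sgnCross X e)

/-- The number of negative edges of the signed graph `(G, σ)`. -/
noncomputable def negNum {V : Type*} (G : SimpleGraph V) (σ : Sym2 V → Bool) : ℕ :=
  {e | e ∈ G.edgeSet ∧ σ e = true}.ncard

/-- The frustration index of `(G, σ)`: the minimum number of negative edges over
all switching-equivalent signatures. -/
noncomputable def frust {V : Type*} (G : SimpleGraph V) (σ : Sym2 V → Bool) : ℕ :=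
  ⨅ X : Set V, negNum G (sgnSwitch σ X)

/-- The number of edges of `G` in the edge-cut `[X, Xᶜ]`. -/
noncomputable def cutSize {V : Type*} (G : SimpleGraph V) (X : Set V) : ℕ :=
  {e | e ∈ G.edgeSet ∧ sgnCross X e = true}.ncard

/-- A graph is 2-edge-connected if every edge-cut has at least 2 edges. -/
def TwoEdgeConn {V : Type*} (G : SimpleGraph V) : Prop :=
  ∀ X : Set V, X.Nonempty → Xᶜ.Nonempty → 2 ≤ cutSize G X

lemma cross_singleton {V : Type*} (v : V) (e : Sym2 V) (he : ¬ e.IsDiag) :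
    sgnCross {v} e = true ↔ v ∈ e := by
  induction e using Sym2.ind with
  | _ a b =>
    simp only [Sym2.isDiag_iff_proj_eq] at he
    simp only [sgnCross, Sym2.lift_mk, Sym2.mem_iff, Set.mem_singleton_iff]
    constructor
    · intro h
      by_cases ha : a = v
      · exact Or.inl ha.symm
      · by_cases hb : b = v
        · exact Or.inr hb.symm
        · simp [ha, hb] at h
    · rintro (rfl | rfl)
      · simp [Ne.symm he]
      · simp [he]

noncomputable def pairFinset {V : Type*} : Sym2 V → Finset V :=
  Sym2.lift ⟨fun a b => {a, b}, fun a b => Finset.pair_comm a b⟩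

lemma mem_pairFinset {V : Type*} (x : V) (e : Sym2 V) : x ∈ pairFinset e ↔ x ∈ e := by
  induction e using Sym2.ind with
  | _ a b => simp [pairFinset]

lemma card_pairFinset {V : Type*} (e : Sym2 V) (he : ¬ e.IsDiag) :
    (pairFinset e).card = 2 := by
  induction e using Sym2.ind with
  | _ a b =>
    simp only [Sym2.isDiag_iff_proj_eq] at he
    simp [pairFinset, Finset.card_pair he]


/-- In a signed subcubic graph whose signature achieves the frustration
index, no two negative edges share an endpoint, and `F(G, σ) ≤ v(G)/2`. -/
theorem subcubic_neg_matching {V : Type*} [Fintype V]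
    (G : SimpleGraph V) (σ : Sym2 V → Bool)
    (hsub : ∀ v : V, (G.neighborSet v).ncard ≤ 3)
    (hach : negNum G σ = frust G σ) :
    (∀ e f : Sym2 V, e ∈ G.edgeSet → f ∈ G.edgeSet → σ e = true → σ f = true →
      e ≠ f → ∀ v : V, v ∈ e → v ∉ f) ∧
    2 * frust G σ ≤ Fintype.card V := by
  have hmin : ∀ X : Set V, negNum G σ ≤ negNum G (sgnSwitch σ X) := by
    intro X
    rw [hach]
    exact ciInf_le (OrderBot.bddBelow _) X
  have hmatch : ∀ e f : Sym2 V, e ∈ G.edgeSet → f ∈ G.edgeSet → σ e = true → σ f = true →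
      e ≠ f → ∀ v : V, v ∈ e → v ∉ f := by
    intro e f he hf hσe hσf hef v hve hvf
    -- switch at {v} decreases negNum
    set A : Set (Sym2 V) := {e | e ∈ G.edgeSet ∧ σ e = true ∧ v ∈ e} with hA
    set A' : Set (Sym2 V) := {e | e ∈ G.edgeSet ∧ σ e = false ∧ v ∈ e} with hA'
    set B : Set (Sym2 V) := {e | e ∈ G.edgeSet ∧ σ e = true ∧ v ∉ e} with hB
    have hAfin : A.Finite := Set.toFinite _
    have hA'fin : A'.Finite := Set.toFinite _
    have hBfin : B.Finite := Set.toFinite _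
    have hA2 : 2 ≤ A.ncard := by
      rw [show (2:ℕ) = 1 + 1 from rfl]
      rw [Nat.add_one_le_iff]
      rw [Set.one_lt_ncard_iff hAfin]
      exact ⟨e, f, ⟨he, hσe, hve⟩, ⟨hf, hσf, hvf⟩, hef⟩
    have hsubAA' : A ∪ A' ⊆ G.incidenceSet v := by
      rintro g (⟨hg, _, hvg⟩ | ⟨hg, _, hvg⟩) <;> exact ⟨hg, hvg⟩
    have hinc : (G.incidenceSet v).ncard ≤ 3 := by
      have : (G.incidenceSet v).ncard = (G.neighborSet v).ncard := by
        rw [← Nat.card_coe_set_eq, ← Nat.card_coe_set_eq]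
        exact Nat.card_congr (G.incidenceSetEquivNeighborSet v)
      rw [this]; exact hsub v
    have hdisjAA' : Disjoint A A' := by
      rw [Set.disjoint_left]
      rintro g ⟨_, hg1, _⟩ ⟨_, hg2, _⟩
      simp [hg1] at hg2
    have hA'1 : A'.ncard ≤ 1 := by
      have hun : A.ncard + A'.ncard ≤ 3 := by
        rw [← Set.ncard_union_eq hdisjAA' hAfin hA'fin]
        exact le_trans (Set.ncard_le_ncard hsubAA' (Set.toFinite _)) hinc
      omega
    have hdisjAB : Disjoint A B := by
      rw [Set.disjoint_left]
      rintro g ⟨_, _, hg1⟩ ⟨_, _, hg2⟩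
      exact hg2 hg1
    have hdisjA'B : Disjoint A' B := by
      rw [Set.disjoint_left]
      rintro g ⟨_, _, hg1⟩ ⟨_, _, hg2⟩
      exact hg2 hg1
    have hold : negNum G σ = A.ncard + B.ncard := by
      rw [← Set.ncard_union_eq hdisjAB hAfin hBfin]
      unfold negNum
      congr 1
      ext g
      simp only [Set.mem_setOf_eq, Set.mem_union, hA, hB]
      constructor
      · rintro ⟨hg, hσg⟩
        by_cases hv : v ∈ g
        · exact Or.inl ⟨hg, hσg, hv⟩
        · exact Or.inr ⟨hg, hσg, hv⟩
      · rintro (⟨hg, hσg, _⟩ | ⟨hg, hσg, _⟩) <;> exact ⟨hg, hσg⟩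
    have hnew : negNum G (sgnSwitch σ {v}) = A'.ncard + B.ncard := by
      rw [← Set.ncard_union_eq hdisjA'B hA'fin hBfin]
      unfold negNum
      congr 1
      ext g
      simp only [Set.mem_setOf_eq, Set.mem_union, hA', hB]
      constructor
      · rintro ⟨hg, hσg⟩
        have hnd := G.not_isDiag_of_mem_edgeSet hg
        by_cases hv : v ∈ g
        · have hc : sgnCross {v} g = true := (cross_singleton v g hnd).mpr hv
          refine Or.inl ⟨hg, ?_, hv⟩
          simp only [sgnSwitch, hc] at hσg
          cases h : σ g
          · rfl
          · simp [h] at hσg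
        · have hc : sgnCross {v} g ≠ true := fun h => hv ((cross_singleton v g hnd).mp h)
          have hc' : sgnCross {v} g = false := Bool.eq_false_iff.mpr hc
          refine Or.inr ⟨hg, ?_, hv⟩
          simpa [sgnSwitch, hc'] using hσg
      · rintro (⟨hg, hσg, hv⟩ | ⟨hg, hσg, hv⟩)
        · have hnd := G.not_isDiag_of_mem_edgeSet hg
          have hc : sgnCross {v} g = true := (cross_singleton v g hnd).mpr hv
          exact ⟨hg, by simp [sgnSwitch, hc, hσg]⟩
        · have hnd := G.not_isDiag_of_mem_edgeSet hg
          have hc : sgnCross {v} g = false := by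
            apply Bool.eq_false_iff.mpr
            exact fun h => hv ((cross_singleton v g hnd).mp h)
          exact ⟨hg, by simp [sgnSwitch, hc, hσg]⟩
    have := hmin {v}
    omega
  refine ⟨hmatch, ?_⟩
  -- second part
  rw [← hach]
  set N : Set (Sym2 V) := {e | e ∈ G.edgeSet ∧ σ e = true} with hN
  have hNfin : N.Finite := Set.toFinite _
  have hcard : negNum G σ = hNfin.toFinset.card := Set.ncard_eq_toFinset_card _ hNfin
  set N' := hNfin.toFinset with hN'
  have hdisj : ∀ e ∈ N', ∀ f ∈ N', e ≠ f → Disjoint (pairFinset e) (pairFinset f) := by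
    intro e heN f hfN hef
    rw [Finset.disjoint_left]
    intro x hxe hxf
    rw [mem_pairFinset] at hxe hxf
    rw [hN', Set.Finite.mem_toFinset] at heN hfN
    exact hmatch e f heN.1 hfN.1 heN.2 hfN.2 hef x hxe hxf
  have hbu : (N'.biUnion pairFinset).card = 2 * N'.card := by
    rw [Finset.card_biUnion hdisj]
    rw [Finset.sum_congr rfl (fun e heN => card_pairFinset e
      (G.not_isDiag_of_mem_edgeSet ((Set.Finite.mem_toFinset _).mp heN).1))]
    simp [Finset.sum_const, mul_comm]
  calc 2 * negNum G σ = (N'.biUnion pairFinset).card := by rw [hcard, hbu]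
    _ ≤ Fintype.card V := Finset.card_le_univ _
end

section
/- There exists an infinite family of signed 2-edge-connected simple subcubic graphs (Gₙ, σₙ) with F(Gₙ, σₙ) = v(Gₙ)/3. Specifically, for each n ≥ 2, the signed graph obtained by arranging n negative-triangle gadgets (each a triangle with exactly one negative edge and one degree-2 vertex) in a cycle, joined by positive edges, is 2-edge-connected, subcubic, has 3n vertices, and has frustration index exactly n. -/
open scoped Classical

/-- The graph `Gₙ`: `n` triangles `aᵢxᵢyᵢ` (on vertices `(i,0), (i,1), (i,2)`)
joined cyclically by the edges `xᵢ y_{i−1}` (indices mod `n`). -/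
def famG (n : ℕ) : SimpleGraph (Fin n × Fin 3) where
  Adj p q := p ≠ q ∧ (p.1 = q.1 ∨
    (p.2 = 1 ∧ q.2 = 2 ∧ ((q.1 : ℕ) + 1) % n = (p.1 : ℕ)) ∨
    (q.2 = 1 ∧ p.2 = 2 ∧ ((p.1 : ℕ) + 1) % n = (q.1 : ℕ)))
  symm := by
    constructor
    rintro p q ⟨hne, h⟩
    refine ⟨Ne.symm hne, ?_⟩
    rcases h with h | h | h
    · exact Or.inl h.symm
    · exact Or.inr (Or.inr h)
    · exact Or.inr (Or.inl h)
  loopless := by constructor; rintro p ⟨hne, -⟩; exact hne rfl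

/-- The signature `σₙ`: the edge `aᵢyᵢ` of each triangle is negative, everything
else is positive. -/
noncomputable def famS (n : ℕ) : Sym2 (Fin n × Fin 3) → Bool :=
  fun e => decide (∃ i : Fin n, e = s((i, (0 : Fin 3)), (i, (2 : Fin 3))))

/-!
`Gₙ` has the Hamiltonian cycle `x₀ a₀ y₀ x₁ a₁ y₁ ⋯`, and the vertices of a closed trail are
2-edge-reachable, so `Gₙ` is 2-edge-connected. A vertex is adjacent only to the two other vertices
of its triangle and to at most one vertex of a neighbouring triangle.

Switching flips an even number of edges of any triangle, since every vertex lies on two of its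
edges, so each of the `n` vertex-disjoint negative triangles `aᵢ xᵢ yᵢ` keeps a negative edge
under every switching: `F(Gₙ, σₙ) ≥ n`. The signature `σₙ` itself has exactly `n` negative edges.
-/

section SignedGraph

variable {V : Type*} {G : SimpleGraph V} {σ : Sym2 V → Bool}

@[simp]
lemma sgnCross_mk (X : Set V) (a b : V) :
    sgnCross X s(a, b) = xor (decide (a ∈ X)) (decide (b ∈ X)) := rfl

@[simp]
lemma sgnSwitch_empty (σ : Sym2 V → Bool) : sgnSwitch σ ∅ = σ := by
  funext e
  induction e using Sym2.ind
  simp [sgnSwitch]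

lemma frust_le_negNum (G : SimpleGraph V) (σ : Sym2 V → Bool) : frust G σ ≤ negNum G σ :=
  calc frust G σ ≤ negNum G (sgnSwitch σ ∅) := ciInf_le (OrderBot.bddBelow _) ∅
    _ = negNum G σ := by rw [sgnSwitch_empty]

def IsNegTriangle (G : SimpleGraph V) (σ : Sym2 V → Bool) (a b c : V) : Prop :=
  G.Adj a b ∧ G.Adj b c ∧ G.Adj a c ∧ xor (σ s(a, b)) (xor (σ s(b, c)) (σ s(a, c))) = true

lemma IsNegTriangle.sgnSwitch {a b c : V} (h : IsNegTriangle G σ a b c) (X : Set V) :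
    IsNegTriangle G (sgnSwitch σ X) a b c := by
  obtain ⟨hab, hbc, hac, hneg⟩ := h
  refine ⟨hab, hbc, hac, ?_⟩
  simp only [_root_.sgnSwitch, sgnCross_mk] at hneg ⊢
  revert hneg
  cases decide (a ∈ X) <;> cases decide (b ∈ X) <;> cases decide (c ∈ X) <;> simp

lemma IsNegTriangle.exists_neg_edge {a b c : V} (h : IsNegTriangle G σ a b c) :
    ∃ e ∈ G.edgeSet, σ e = true ∧ ∀ v ∈ e, v = a ∨ v = b ∨ v = c := by
  obtain ⟨hab, hbc, hac, hneg⟩ := h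
  by_cases h₁ : σ s(a, b) = true
  · exact ⟨_, hab, h₁, by simp +contextual⟩
  by_cases h₂ : σ s(b, c) = true
  · exact ⟨_, hbc, h₂, by simp +contextual⟩
  refine ⟨s(a, c), hac, by simpa [h₁, h₂] using hneg, by simp +contextual⟩

lemma card_le_negNum_of_isNegTriangle [Finite V] {ι : Type*} [Fintype ι] (a b c : ι → V)
    (p : V → ι) (htri : ∀ i, IsNegTriangle G σ (a i) (b i) (c i))
    (hp : ∀ i, p (a i) = i ∧ p (b i) = i ∧ p (c i) = i) :
    Fintype.card ι ≤ negNum G σ := by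
  choose e heG hneg hv using fun i => (htri i).exists_neg_edge
  have hp_mem : ∀ i, ∀ v ∈ e i, p v = i := fun i v hv' => by
    rcases hv i v hv' with rfl | rfl | rfl
    exacts [(hp i).1, (hp i).2.1, (hp i).2.2]
  have he_inj : Function.Injective e := fun i j hij =>
    (hp_mem i _ (Sym2.out_fst_mem _)).symm.trans (hp_mem j _ (hij ▸ Sym2.out_fst_mem _))
  calc Fintype.card ι = (Set.range e).ncard := by
        rw [Set.ncard_range_of_injective he_inj, Nat.card_eq_fintype_card]
    _ ≤ negNum G σ := Set.ncard_le_ncard (by rintro _ ⟨i, rfl⟩; exact ⟨heG i, hneg i⟩)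

lemma card_le_frust_of_isNegTriangle [Finite V] {ι : Type*} [Fintype ι] (a b c : ι → V)
    (p : V → ι) (htri : ∀ i, IsNegTriangle G σ (a i) (b i) (c i))
    (hp : ∀ i, p (a i) = i ∧ p (b i) = i ∧ p (c i) = i) :
    Fintype.card ι ≤ frust G σ :=
  le_ciInf fun X => card_le_negNum_of_isNegTriangle a b c p (fun i => (htri i).sgnSwitch X) hp

end SignedGraph

section EdgeConnectivity

open SimpleGraph

variable {V : Type*} {G : SimpleGraph V}

lemma SimpleGraph.IsEdgeReachable.le_cutSize [Finite V] {k : ℕ} {u v : V} {X : Set V}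
    (h : G.IsEdgeReachable k u v) (hu : u ∈ X) (hv : v ∉ X) : k ≤ cutSize G X := by
  by_contra! hlt
  set C := {e | e ∈ G.edgeSet ∧ sgnCross X e = true}
  have hC : C.encard < k := by rw [← C.toFinite.cast_ncard_eq]; exact_mod_cast hlt
  obtain ⟨w⟩ := h hC
  obtain ⟨d, -, hd₁, hd₂⟩ := w.exists_boundary_dart X hu hv
  obtain ⟨hadj, hnot⟩ := deleteEdges_adj.mp d.adj
  exact hnot ⟨hadj, by simp [hd₁, hd₂]⟩

lemma twoEdgeConn_of_isEdgeConnected_two [Finite V] (h : G.IsEdgeConnected 2) :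
    TwoEdgeConn G :=
  fun _ ⟨u, hu⟩ ⟨v, hv⟩ => (h u v).le_cutSize hu hv

lemma SimpleGraph.IsHamiltonian.isEdgeConnected_two [Fintype V] [DecidableEq V]
    (hG : G.IsHamiltonian) : G.IsEdgeConnected 2 := by
  intro u v
  cases subsingleton_or_nontrivial V
  · exact .of_subsingleton
  · obtain ⟨p, hp⟩ := hG.exists_isHamiltonianCycle u
    exact hp.isCycle.isTrail.isEdgeReachable_two (hp.mem_support u) (hp.mem_support v)

end EdgeConnectivity

lemma Set.ncard_le_three_of_subset {α : Type*} {s : Set α} {a b c : α} (h : s ⊆ {a, b, c}) :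
    s.ncard ≤ 3 := by
  classical
  calc s.ncard ≤ (({a, b, c} : Finset α) : Set α).ncard :=
        Set.ncard_le_ncard (by simpa using h) (Finset.finite_toSet _)
    _ ≤ 3 := by rw [Set.ncard_coe_finset]; exact Finset.card_le_three

section famG

open SimpleGraph

variable {n : ℕ}

lemma famG_adj_iff [NeZero n] {p q : Fin n × Fin 3} :
    (famG n).Adj p q ↔ p ≠ q ∧ (p.1 = q.1 ∨ (p.2 = 1 ∧ q.2 = 2 ∧ q.1 + 1 = p.1) ∨
      (q.2 = 1 ∧ p.2 = 2 ∧ p.1 + 1 = q.1)) := by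
  have hsucc : ∀ a b : Fin n, ((a : ℕ) + 1) % n = b ↔ a + 1 = b := fun a b => by
    rw [Fin.ext_iff, Fin.val_add, Fin.val_one', Nat.add_mod_mod]
  simp only [famG, hsucc]

lemma famG_adj_of_fst_eq {p q : Fin n × Fin 3} (hne : p ≠ q) (h : p.1 = q.1) :
    (famG n).Adj p q :=
  ⟨hne, Or.inl h⟩

/-- Vertex `t = 3 i + r` of the Hamiltonian cycle `x₀ a₀ y₀ x₁ a₁ y₁ ⋯` of `famG n`. -/
def famGCycleVertex (n : ℕ) (t : Fin (n * 3)) : Fin n × Fin 3 :=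
  (t.divNat, ![1, 0, 2] t.modNat)

lemma famGCycleVertex_injective : Function.Injective (famGCycleVertex n) := by
  have hperm : Function.Injective (![1, 0, 2] : Fin 3 → Fin 3) := by decide
  intro a b h
  simp only [famGCycleVertex, Prod.mk.injEq] at h
  exact finProdFinEquiv.symm.injective (Prod.ext h.1 (hperm h.2))

lemma famG_adj_famGCycleVertex {a b : Fin (n * 3)}
    (h : (b : ℕ) = a + 1 ∨ ((a : ℕ) + 1 = n * 3 ∧ (b : ℕ) = 0)) :
    (famG n).Adj (famGCycleVertex n a) (famGCycleVertex n b) := by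
  have ha := a.isLt
  have hb := b.isLt
  have hmod : ∀ t : Fin (n * 3), t.modNat = ⟨t % 3, Nat.mod_lt _ (by norm_num)⟩ := fun _ => rfl
  simp only [famG, famGCycleVertex, ne_eq, Prod.ext_iff, Fin.ext_iff, Fin.coe_divNat, hmod]
  have : (a : ℕ) % 3 = 0 ∨ (a : ℕ) % 3 = 1 ∨ (a : ℕ) % 3 = 2 := by omega
  rcases this with h3 | h3 | h3
  · have hb3 : (b : ℕ) % 3 = 1 := by omega
    have hdiv : (b : ℕ) / 3 = a / 3 := by omega
    simp [h3, hb3, hdiv]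
  · have hb3 : (b : ℕ) % 3 = 2 := by omega
    have hdiv : (b : ℕ) / 3 = a / 3 := by omega
    simp [h3, hb3, hdiv]
  · have hb3 : (b : ℕ) % 3 = 0 := by omega
    have hdiv : ((a : ℕ) / 3 + 1) % n = b / 3 := by
      rcases h with h | ⟨h, h'⟩
      · rw [Nat.mod_eq_of_lt (by omega)]; omega
      · rw [show (a : ℕ) / 3 + 1 = n by omega, Nat.mod_self]; omega
    simp [h3, hb3, hdiv]

lemma famG_adj_famGCycleVertex_of_adj {a b : Fin (n * 3)} (h : (cycleGraph (n * 3)).Adj a b) :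
    (famG n).Adj (famGCycleVertex n a) (famGCycleVertex n b) := by
  have hsucc : ∀ a b : Fin (n * 3), (b - a : Fin (n * 3)).val = 1 →
      (famG n).Adj (famGCycleVertex n a) (famGCycleVertex n b) := fun a b h => by
    apply famG_adj_famGCycleVertex
    rcases le_or_gt a b with hab | hab
    · rw [Fin.coe_sub_iff_le.mpr hab] at h
      omega
    · rw [Fin.coe_sub_iff_lt.mpr hab] at h
      omega
  rcases cycleGraph_adj'.mp h with h | h
  exacts [(hsucc b a h).symm, hsucc a b h]

lemma famG_isHamiltonian (hn : 0 < n) : (famG n).IsHamiltonian := by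
  intro _
  have hcopy : cycleGraph (n * 3) ⊑ famG n :=
    ⟨⟨⟨famGCycleVertex n, famG_adj_famGCycleVertex_of_adj⟩, famGCycleVertex_injective⟩⟩
  obtain ⟨v, p, hp, hlen⟩ := (cycleGraph_isContained_iff (by omega)).mp hcopy
  exact ⟨v, p, Walk.isHamiltonianCycle_iff_isCycle_and_length_eq.mpr ⟨hp, by simp [hlen]⟩⟩

lemma famG_isEdgeConnected_two (n : ℕ) : (famG n).IsEdgeConnected 2 := by
  rcases n.eq_zero_or_pos with rfl | hn
  · exact .of_subsingleton
  · exact (famG_isHamiltonian hn).isEdgeConnected_two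

lemma famG_ncard_neighborSet_le (v : Fin n × Fin 3) : ((famG n).neighborSet v).ncard ≤ 3 := by
  obtain ⟨i, j⟩ := v
  have : NeZero n := ⟨i.pos.ne'⟩
  fin_cases j
  · refine Set.ncard_le_three_of_subset (a := (i, 0)) (b := (i, 1)) (c := (i, 2)) ?_
    rintro ⟨i', j'⟩ hq
    rw [mem_neighborSet, famG_adj_iff] at hq
    fin_cases j' <;> simp_all
  · refine Set.ncard_le_three_of_subset (a := (i, 0)) (b := (i, 2)) (c := (i - 1, 2)) ?_
    rintro ⟨i', j'⟩ hq
    rw [mem_neighborSet, famG_adj_iff] at hq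
    fin_cases j' <;> simp_all [eq_sub_iff_add_eq, @eq_comm _ i]
  · refine Set.ncard_le_three_of_subset (a := (i, 0)) (b := (i, 1)) (c := (i + 1, 1)) ?_
    rintro ⟨i', j'⟩ hq
    rw [mem_neighborSet, famG_adj_iff] at hq
    fin_cases j' <;> simp_all [eq_comm]

lemma famS_isNegTriangle (i : Fin n) : IsNegTriangle (famG n) (famS n) (i, 0) (i, 1) (i, 2) :=
  ⟨famG_adj_of_fst_eq (by simp) rfl, famG_adj_of_fst_eq (by simp) rfl,
    famG_adj_of_fst_eq (by simp) rfl, by simp [famS]⟩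

lemma negNum_famG_famS : negNum (famG n) (famS n) = n := by
  have hneg : {e | e ∈ (famG n).edgeSet ∧ famS n e = true} =
      Set.range fun i : Fin n => s((i, 0), (i, 2)) := by
    ext e
    constructor
    · rintro ⟨-, he⟩
      simpa [famS, eq_comm] using he
    · rintro ⟨i, rfl⟩
      exact ⟨famG_adj_of_fst_eq (by simp) rfl, by simp [famS]⟩
  have hinj : Function.Injective fun i : Fin n => s((i, (0 : Fin 3)), (i, (2 : Fin 3))) :=
    fun i j h => by simpa [Sym2.eq_iff] using h
  rw [negNum, hneg, Set.ncard_range_of_injective hinj, Nat.card_eq_fintype_card, Fintype.card_fin]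

lemma frust_famG_famS : frust (famG n) (famS n) = n := by
  refine le_antisymm ((frust_le_negNum _ _).trans_eq negNum_famG_famS) ?_
  simpa using card_le_frust_of_isNegTriangle (fun i => (i, 0)) (fun i => (i, 1)) (fun i => (i, 2))
    Prod.fst famS_isNegTriangle fun _ => ⟨rfl, rfl, rfl⟩

end famG

theorem famG_twoEdgeConn_subcubic_frust_general (n : ℕ) :
    TwoEdgeConn (famG n) ∧
    (∀ v, ((famG n).neighborSet v).ncard ≤ 3) ∧
    Fintype.card (Fin n × Fin 3) = 3 * n ∧
    frust (famG n) (famS n) = n :=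
  ⟨twoEdgeConn_of_isEdgeConnected_two (famG_isEdgeConnected_two n), famG_ncard_neighborSet_le,
    by simp [mul_comm], frust_famG_famS⟩

/-- For every `n ≥ 2`, the signed graph `(Gₙ, σₙ)` (`n` negative-triangle
gadgets joined in a cycle by positive edges) is 2-edge-connected, subcubic, has `3n`
vertices, and has frustration index exactly `n` (= one third of its vertices). -/
theorem famG_twoEdgeConn_subcubic_frust (n : ℕ) (hn : 2 ≤ n) :
    TwoEdgeConn (famG n) ∧
    (∀ v, ((famG n).neighborSet v).ncard ≤ 3) ∧
    Fintype.card (Fin n × Fin 3) = 3 * n ∧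
    frust (famG n) (famS n) = n :=
  famG_twoEdgeConn_subcubic_frust_general n
end

section
/- Let (G, σ) be a signed 2-edge-connected subcubic graph (parallel edges allowed) whose signature achieves the frustration index, and suppose F(G, σ) = v(G)/2. Then either (G, σ) is switching-equivalent to K₄ with a negative perfect matching, or every vertex of G lies in a digon (a pair of parallel edges, one positive and one negative). -/
open scoped Classical

/-- The edge-endpoint map of `K₄` as a multigraph on `Fin 4` with edge set `Fin 6`. -/
def k4ends : Fin 6 → Sym2 (Fin 4) :=
  ![s(0, 1), s(2, 3), s(0, 2), s(0, 3), s(1, 2), s(1, 3)]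

/-- The signature of `Γ̂₁`: the perfect matching `{0,1}, {2,3}` is negative. -/
def k4sign : Fin 6 → Bool := ![true, true, false, false, false, false]

/- ============================ auxiliary development ============================ -/

lemma cross_mk_iff {V : Type*} (X : Set V) (x y : V) :
    sgnCross X s(x,y) = true ↔ ((x ∈ X ∧ y ∉ X) ∨ (y ∈ X ∧ x ∉ X)) := by
  by_cases hx : x ∈ X <;> by_cases hy : y ∈ X <;> simp [sgnCross, hx, hy]

lemma cross_empty {V : Type*} (z : Sym2 V) : sgnCross ∅ z = false := by
  obtain ⟨⟨x,y⟩, h⟩ := Quot.exists_rep z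
  rw [← h]; simp [sgnCross]

lemma sym2_rep {V : Type*} (z : Sym2 V) : ∃ x y, z = s(x,y) := by
  obtain ⟨⟨x,y⟩, h⟩ := Quot.exists_rep z
  exact ⟨x, y, h.symm⟩

/-- Context: all the structural facts extracted from the hypotheses of the theorem. -/
structure Ctx (V E : Type*) [Fintype V] [Fintype E] where
  ends : E → Sym2 V
  sg : E → Bool
  m : V → E
  mu : V → V
  hloop : ∀ e, ¬ (ends e).IsDiag
  hmσ : ∀ v, sg (m v) = true
  hmends : ∀ v, ends (m v) = s(v, mu v)
  hμne : ∀ v, mu v ≠ v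
  hmuniq : ∀ v e, sg e = true → v ∈ ends e → e = m v
  hpos2 : ∀ v, (Finset.univ.filter (fun e => sg e = false ∧ v ∈ ends e)).card ≤ 2
  hpos1 : ∀ v, 1 ≤ (Finset.univ.filter (fun e => sg e = false ∧ v ∈ ends e)).card
  hcut : ∀ X : Set V,
    (Finset.univ.filter (fun e => sg e = true ∧ sgnCross X (ends e) = true)).card ≤
    (Finset.univ.filter (fun e => sg e = false ∧ sgnCross X (ends e) = true)).card
  h2ec : ∀ X : Set V, X.Nonempty → Xᶜ.Nonempty →
    2 ≤ (Finset.univ.filter (fun e => sgnCross X (ends e) = true)).card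

namespace Ctx

variable {V E : Type*} [Fintype V] [Fintype E] (C : Ctx V E)

/-- positive edges at a vertex -/
noncomputable def Pos (v : V) : Finset E :=
  Finset.univ.filter (fun e => C.sg e = false ∧ v ∈ C.ends e)

/-- positive edges with prescribed ends -/
noncomputable def Epar (x y : V) : Finset E :=
  Finset.univ.filter (fun e => C.sg e = false ∧ C.ends e = s(x,y))

noncomputable def NegCut (X : Set V) : Finset E :=
  Finset.univ.filter (fun e => C.sg e = true ∧ sgnCross X (C.ends e) = true)

noncomputable def PosCut (X : Set V) : Finset E :=
  Finset.univ.filter (fun e => C.sg e = false ∧ sgnCross X (C.ends e) = true)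

lemma hμμ (v : V) : C.mu (C.mu v) = v := by
  have h1 : C.mu v ∈ C.ends (C.m v) := by rw [C.hmends]; simp
  have h2 : C.m (C.mu v) = C.m v := (C.hmuniq (C.mu v) (C.m v) (C.hmσ v) h1).symm
  have h3 : C.ends (C.m v) = s(C.mu v, C.mu (C.mu v)) := by rw [← h2, C.hmends]
  rw [C.hmends] at h3
  rcases Sym2.eq_iff.mp h3 with ⟨h, _⟩ | ⟨h, _⟩
  · exact absurd h.symm (C.hμne v)
  · exact h.symm

lemma m_mu (v : V) : C.m (C.mu v) = C.m v := by
  have h1 : C.mu v ∈ C.ends (C.m v) := by rw [C.hmends]; simp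
  exact (C.hmuniq (C.mu v) (C.m v) (C.hmσ v) h1).symm

lemma m_eq_cases {x y : V} (h : C.m x = C.m y) : y = x ∨ y = C.mu x := by
  have h1 : y ∈ C.ends (C.m y) := by rw [C.hmends]; simp
  rw [← h, C.hmends] at h1
  exact Sym2.mem_iff.mp h1

lemma ends_ne {e : E} {x y : V} (h : C.ends e = s(x,y)) : x ≠ y := by
  have := C.hloop e
  rw [h] at this
  simpa [Sym2.isDiag_iff_proj_eq] using this

/-- Every positive edge at `v` has the form `s(v,w)`. -/
lemma pos_other {e : E} {v : V} (he : e ∈ C.Pos v) :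
    ∃ w, w ≠ v ∧ C.ends e = s(v, w) := by
  simp only [Pos, Finset.mem_filter] at he
  obtain ⟨x, y, hxy⟩ := sym2_rep (C.ends e)
  rcases Sym2.mem_iff.mp (hxy ▸ he.2.2) with h | h
  · exact ⟨y, fun hc => C.ends_ne hxy (h ▸ hc ▸ rfl), by rw [hxy, h]⟩
  · exact ⟨x, fun hc => C.ends_ne hxy (hc.trans h), by rw [hxy, h, Sym2.eq_swap]⟩


lemma hcutF (X : Set V) : (C.NegCut X).card ≤ (C.PosCut X).card := C.hcut X

lemma posCut_elim {X : Set V} {h : E} (hh : h ∈ C.PosCut X) :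
    ∃ p q, C.ends h = s(p,q) ∧ p ∈ X ∧ q ∉ X ∧ h ∈ C.Pos p := by
  simp only [PosCut, Finset.mem_filter] at hh
  obtain ⟨x, y, hxy⟩ := sym2_rep (C.ends h)
  rcases (cross_mk_iff X x y).mp (hxy ▸ hh.2.2) with ⟨h1,h2⟩|⟨h1,h2⟩
  · exact ⟨x, y, hxy, h1, h2, by simp [Pos, hh.2.1, hxy]⟩
  · exact ⟨y, x, by rw [hxy, Sym2.eq_swap], h1, h2, by simp [Pos, hh.2.1, hxy]⟩

lemma m_mem_negcut {X : Set V} {v : V} (hv : v ∈ X) (hμv : C.mu v ∉ X) :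
    C.m v ∈ C.NegCut X := by
  simp only [NegCut, Finset.mem_filter]
  refine ⟨Finset.mem_univ _, C.hmσ v, ?_⟩
  rw [C.hmends]
  exact (cross_mk_iff X v (C.mu v)).mpr (Or.inl ⟨hv, hμv⟩)

lemma not_cross_in {X : Set V} {h : E} {x y : V} (hh : C.ends h = s(x,y))
    (hx : x ∈ X) (hy : y ∈ X) : ¬ sgnCross X (C.ends h) = true := by
  rw [hh]
  intro hc
  rcases (cross_mk_iff X x y).mp hc with ⟨_,h2⟩|⟨_,h2⟩ <;> [exact h2 hy; exact h2 hx]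

/-- no μ-free positively-connected triple -/
lemma GT3 {x y z : V} (e f : E)
    (he : C.sg e = false) (hee : C.ends e = s(x,y))
    (hf : C.sg f = false) (hfe : C.ends f = s(x,z))
    (hzy : z ≠ y) (h1 : C.mu x ≠ y) (h2 : C.mu x ≠ z) (h3 : C.mu y ≠ z) : False := by
  have hyx : x ≠ y := C.ends_ne hee
  have hzx : x ≠ z := C.ends_ne hfe
  have hμyx : C.mu y ≠ x := fun hc => h1 (by rw [← hc, C.hμμ])
  have hμzx : C.mu z ≠ x := fun hc => h2 (by rw [← hc, C.hμμ])
  have hμzy : C.mu z ≠ y := fun hc => h3 (by rw [← hc, C.hμμ])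
  have hnef : e ≠ f := by
    intro hc
    rw [hc, hfe] at hee
    rcases Sym2.eq_iff.mp hee with ⟨_, h⟩ | ⟨h, _⟩ <;> [exact hzy h; exact hyx h]
  set X : Set V := {x, y, z} with hX
  have hmem : ∀ p : V, p ∈ X ↔ p = x ∨ p = y ∨ p = z := by intro p; simp [hX]
  -- negative cut has ≥ 3 edges
  have hmx : C.m x ∈ C.NegCut X := C.m_mem_negcut (by simp [hmem])
    (by simp [hmem, C.hμne x, h1, h2])
  have hmy : C.m y ∈ C.NegCut X := C.m_mem_negcut (by simp [hmem])
    (by simp [hmem, C.hμne y, hμyx, h3])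
  have hmz : C.m z ∈ C.NegCut X := C.m_mem_negcut (by simp [hmem])
    (by simp [hmem, C.hμne z, hμzx, hμzy])
  have mxy : C.m x ≠ C.m y := fun hc =>
    (C.m_eq_cases hc).elim (fun h => hyx h.symm) (fun h => h1 h.symm)
  have mxz : C.m x ≠ C.m z := fun hc =>
    (C.m_eq_cases hc).elim (fun h => hzx h.symm) (fun h => h2 h.symm)
  have myz : C.m y ≠ C.m z := fun hc =>
    (C.m_eq_cases hc).elim (fun h => hzy h) (fun h => h3 h.symm)
  have hneg : 3 ≤ (C.NegCut X).card := by
    have hsub : ({C.m x, C.m y, C.m z} : Finset E) ⊆ C.NegCut X := by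
      intro w hw
      simp only [Finset.mem_insert, Finset.mem_singleton] at hw
      rcases hw with rfl|rfl|rfl <;> assumption
    have hc := Finset.card_le_card hsub
    rw [Finset.card_insert_of_notMem (by simp [mxy, mxz]),
      Finset.card_insert_of_notMem (by simp [myz]), Finset.card_singleton] at hc
    exact hc
  -- positive cut has ≤ 2 edges
  have hex : e ∈ C.Pos x := by simp [Pos, he, hee]
  have hfx : f ∈ C.Pos x := by simp [Pos, hf, hfe]
  have hey : e ∈ C.Pos y := by simp [Pos, he, hee]
  have hfz : f ∈ C.Pos z := by simp [Pos, hf, hfe]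
  have hsub : C.PosCut X ⊆ ((C.Pos x \ {e,f}) ∪ (C.Pos y \ {e})) ∪ (C.Pos z \ {f}) := by
    intro h hh
    obtain ⟨p, q, hpq, hp, hq, hpos⟩ := C.posCut_elim hh
    have hhe : h ≠ e := by
      rintro rfl
      rw [hee] at hpq
      rcases Sym2.eq_iff.mp hpq with ⟨h4,h5⟩|⟨h4,h5⟩
      · exact hq (by rw [← h5]; simp [hmem])
      · exact hq (by rw [← h4]; simp [hmem])
    have hhf : h ≠ f := by
      rintro rfl
      rw [hfe] at hpq
      rcases Sym2.eq_iff.mp hpq with ⟨h4,h5⟩|⟨h4,h5⟩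
      · exact hq (by rw [← h5]; simp [hmem])
      · exact hq (by rw [← h4]; simp [hmem])
    rcases (hmem p).mp hp with rfl|rfl|rfl
    · exact Finset.mem_union_left _ (Finset.mem_union_left _ (by simp [hpos, hhe, hhf]))
    · exact Finset.mem_union_left _ (Finset.mem_union_right _ (by simp [hpos, hhe]))
    · exact Finset.mem_union_right _ (by simp [hpos, hhf])
  have c1 : (C.Pos x \ {e,f}).card ≤ 0 := by
    have hss : ({e,f} : Finset E) ⊆ C.Pos x := by
      intro w hw; simp only [Finset.mem_insert, Finset.mem_singleton] at hw
      rcases hw with rfl|rfl <;> assumption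
    have := Finset.card_sdiff_of_subset hss
    have h2' := C.hpos2 x
    have hp2 : ({e,f} : Finset E).card = 2 := Finset.card_pair hnef
    simp only [Pos] at this h2' ⊢
    omega
  have c2 : (C.Pos y \ {e}).card ≤ 1 := by
    have := Finset.card_sdiff_of_subset (Finset.singleton_subset_iff.mpr hey)
    have h2' := C.hpos2 y
    simp only [Pos, Finset.card_singleton] at this h2' ⊢
    omega
  have c3 : (C.Pos z \ {f}).card ≤ 1 := by
    have := Finset.card_sdiff_of_subset (Finset.singleton_subset_iff.mpr hfz)
    have h2' := C.hpos2 z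
    simp only [Pos, Finset.card_singleton] at this h2' ⊢
    omega
  have hposc : (C.PosCut X).card ≤ 2 := by
    have := Finset.card_le_card hsub
    have hu := Finset.card_union_le ((C.Pos x \ {e,f}) ∪ (C.Pos y \ {e})) (C.Pos z \ {f})
    have hu2 := Finset.card_union_le (C.Pos x \ {e,f}) (C.Pos y \ {e})
    omega
  have := C.hcutF X
  omega

/-- no parallel positive edges between non-partners -/
lemma GT2 {x y : V} (e f : E)
    (he : C.sg e = false) (hee : C.ends e = s(x,y))
    (hf : C.sg f = false) (hfe : C.ends f = s(x,y))
    (hnef : e ≠ f) (h1 : C.mu x ≠ y) : False := by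
  have hyx : x ≠ y := C.ends_ne hee
  have hμyx : C.mu y ≠ x := fun hc => h1 (by rw [← hc, C.hμμ])
  set X : Set V := {x, y} with hX
  have hmem : ∀ p : V, p ∈ X ↔ p = x ∨ p = y := by intro p; simp [hX]
  have hmx : C.m x ∈ C.NegCut X := C.m_mem_negcut (by simp [hmem])
    (by simp [hmem, C.hμne x, h1])
  have hmy : C.m y ∈ C.NegCut X := C.m_mem_negcut (by simp [hmem])
    (by simp [hmem, C.hμne y, hμyx])
  have mxy : C.m x ≠ C.m y := fun hc =>
    (C.m_eq_cases hc).elim (fun h => hyx h.symm) (fun h => h1 h.symm)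
  have hneg : 2 ≤ (C.NegCut X).card := by
    have hsub : ({C.m x, C.m y} : Finset E) ⊆ C.NegCut X := by
      intro w hw; simp only [Finset.mem_insert, Finset.mem_singleton] at hw
      rcases hw with rfl|rfl <;> assumption
    have hc := Finset.card_le_card hsub
    rwa [Finset.card_pair mxy] at hc
  have hex : e ∈ C.Pos x := by simp [Pos, he, hee]
  have hfx : f ∈ C.Pos x := by simp [Pos, hf, hfe]
  have hey : e ∈ C.Pos y := by simp [Pos, he, hee]
  have hfy : f ∈ C.Pos y := by simp [Pos, hf, hfe]
  have hsub : C.PosCut X ⊆ (C.Pos x \ {e,f}) ∪ (C.Pos y \ {e,f}) := by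
    intro h hh
    obtain ⟨p, q, hpq, hp, hq, hpos⟩ := C.posCut_elim hh
    have hhe : h ≠ e := by
      rintro rfl
      rw [hee] at hpq
      rcases Sym2.eq_iff.mp hpq with ⟨h4,h5⟩|⟨h4,h5⟩
      · exact hq (by rw [← h5]; simp [hmem])
      · exact hq (by rw [← h4]; simp [hmem])
    have hhf : h ≠ f := by
      rintro rfl
      rw [hfe] at hpq
      rcases Sym2.eq_iff.mp hpq with ⟨h4,h5⟩|⟨h4,h5⟩
      · exact hq (by rw [← h5]; simp [hmem])
      · exact hq (by rw [← h4]; simp [hmem])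
    rcases (hmem p).mp hp with rfl|rfl
    · exact Finset.mem_union_left _ (by simp [hpos, hhe, hhf])
    · exact Finset.mem_union_right _ (by simp [hpos, hhe, hhf])
  have hcard2 : ({e,f} : Finset E).card = 2 := Finset.card_pair hnef
  have c1 : (C.Pos x \ {e,f}).card ≤ 0 := by
    have hss : ({e,f} : Finset E) ⊆ C.Pos x := by
      intro w hw; simp only [Finset.mem_insert, Finset.mem_singleton] at hw
      rcases hw with rfl|rfl <;> assumption
    have := Finset.card_sdiff_of_subset hss
    have h2' := C.hpos2 x
    simp only [Pos] at this h2' ⊢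
    omega
  have c2 : (C.Pos y \ {e,f}).card ≤ 0 := by
    have hss : ({e,f} : Finset E) ⊆ C.Pos y := by
      intro w hw; simp only [Finset.mem_insert, Finset.mem_singleton] at hw
      rcases hw with rfl|rfl <;> assumption
    have := Finset.card_sdiff_of_subset hss
    have h2' := C.hpos2 y
    simp only [Pos] at this h2' ⊢
    omega
  have hposc : (C.PosCut X).card ≤ 0 := by
    have := Finset.card_le_card hsub
    have hu := Finset.card_union_le (C.Pos x \ {e,f}) (C.Pos y \ {e,f})
    omega
  have := C.hcutF X
  omega

/-- parallel positive edge between non-partners is unique -/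
lemma Epar_le_one {x y : V} (h1 : C.mu x ≠ y) (e f : E)
    (he : C.sg e = false) (hee : C.ends e = s(x,y))
    (hf : C.sg f = false) (hfe : C.ends f = s(x,y)) : e = f := by
  by_contra hnef
  exact C.GT2 e f he hee hf hfe hnef h1


/-- all edges crossing a cut -/
noncomputable def CutAll (X : Set V) : Finset E :=
  Finset.univ.filter (fun e => sgnCross X (C.ends e) = true)

lemma h2ecF (X : Set V) (h1 : X.Nonempty) (h2 : Xᶜ.Nonempty) : 2 ≤ (C.CutAll X).card :=
  C.h2ec X h1 h2

def NoDigon (x : V) : Prop := ∀ g : E, C.sg g = false → C.ends g ≠ s(x, C.mu x)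

lemma nodigon_mu {x : V} (h : C.NoDigon x) : C.NoDigon (C.mu x) := by
  intro g hg hge
  rw [C.hμμ] at hge
  exact h g hg (by rw [hge, Sym2.eq_swap])

lemma sym2_other {p q α β : V} (h : s(p,q) = s(α,β)) :
    (p = α ∧ q = β) ∨ (p = β ∧ q = α) := Sym2.eq_iff.mp h

lemma sym2_cancel {p q r : V} (h : s(p,q) = s(p,r)) (hpr : p ≠ r) : q = r := by
  rcases Sym2.eq_iff.mp h with ⟨_, h2⟩ | ⟨h1, _⟩
  · exact h2
  · exact absurd h1 hpr

lemma neg_ends {h : E} {p q : V} (hσ : C.sg h = true) (hpq : C.ends h = s(p,q)) :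
    h = C.m p ∧ q = C.mu p := by
  have hp : p ∈ C.ends h := by rw [hpq]; simp
  have h1 : h = C.m p := C.hmuniq p h hσ hp
  have h2 : C.ends h = s(p, C.mu p) := by rw [h1, C.hmends]
  rw [hpq] at h2
  exact ⟨h1, sym2_cancel h2 (fun hc => C.hμne p hc.symm)⟩

lemma cutAll_elim {X : Set V} {h : E} (hh : h ∈ C.CutAll X) :
    ∃ p q, C.ends h = s(p,q) ∧ p ∈ X ∧ q ∉ X := by
  simp only [CutAll, Finset.mem_filter] at hh
  obtain ⟨x, y, hxy⟩ := sym2_rep (C.ends h)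
  rcases (cross_mk_iff X x y).mp (hxy ▸ hh.2) with ⟨h1,h2⟩|⟨h1,h2⟩
  · exact ⟨x, y, hxy, h1, h2⟩
  · exact ⟨y, x, by rw [hxy, Sym2.eq_swap], h1, h2⟩

/-- positive neighbours of a non-digon vertex are confined to a single pair -/
lemma L1 {x a q : V} (hnd : C.NoDigon x) {e : E} (he : C.sg e = false)
    (hee : C.ends e = s(x,a)) {f : E} (hf : C.sg f = false)
    (hfe : C.ends f = s(x,q)) : q = a ∨ q = C.mu a := by
  by_contra hcon
  push_neg at hcon
  exact C.GT3 e f he hee hf hfe hcon.1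
    (fun hc => hnd e he (by rw [hee, hc]))
    (fun hc => hnd f hf (by rw [hfe, hc]))
    (fun hc => hcon.2 hc.symm)

/-- second-neighbour confinement -/
lemma L2 {x a z : V} (hnd : C.NoDigon x) {e : E} (he : C.sg e = false)
    (hee : C.ends e = s(x,a)) {f : E} (hf : C.sg f = false)
    (hfe : C.ends f = s(a,z)) : z = x ∨ z = C.mu x ∨ z = C.mu a := by
  by_contra hcon
  push_neg at hcon
  have hee' : C.ends e = s(a, x) := by rw [hee, Sym2.eq_swap]
  refine C.GT3 e f he hee' hf hfe (fun hc => hcon.1 hc) ?_ ?_ ?_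
  · intro hc
    have : a = C.mu x := by rw [← hc, C.hμμ]
    exact hnd e he (by rw [hee, this])
  · exact fun hc => hcon.2.2 hc.symm
  · exact fun hc => hcon.2.1 hc.symm

/-- the pair positively attached to a non-digon vertex is itself a non-digon pair -/
lemma ND {x a : V} (hnd : C.NoDigon x) {e : E} (he : C.sg e = false)
    (hee : C.ends e = s(x,a)) : C.NoDigon a := by
  intro g hg hge
  -- notation
  have hax : x ≠ a := C.ends_ne hee
  have haμx : a ≠ C.mu x := fun hc => hnd e he (by rw [hee, hc])
  have ha'x : C.mu a ≠ x := fun hc => haμx (by rw [← hc, C.hμμ])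
  have ha'a : C.mu a ≠ a := C.hμne a
  have hμxa' : C.mu x ≠ C.mu a := fun hc => hax (by
    have := congrArg C.mu hc; rwa [C.hμμ, C.hμμ] at this)
  -- Pos a = {e, g}
  have heg : e ≠ g := by
    intro hc
    rw [hc, hge] at hee
    rcases Sym2.eq_iff.mp hee with ⟨h1, _⟩ | ⟨_, h1⟩
    · exact hax h1.symm
    · exact ha'x h1
  have hsubeg : ({e, g} : Finset E) ⊆ C.Pos a := by
    intro w hw
    simp only [Finset.mem_insert, Finset.mem_singleton] at hw
    rcases hw with rfl|rfl
    · simp [Pos, he, hee]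
    · simp [Pos, hg, hge]
  have hPosa : ({e, g} : Finset E) = C.Pos a := by
    refine Finset.eq_of_subset_of_card_le hsubeg ?_
    rw [Finset.card_pair heg]
    exact C.hpos2 a
  -- cut at {x, a} produces a positive edge x – mu a
  set X : Set V := {x, a} with hX
  have hmem : ∀ p : V, p ∈ X ↔ p = x ∨ p = a := by intro p; simp [hX]
  have hμxna : C.mu x ≠ a := fun hc => haμx hc.symm
  have hmx : C.m x ∈ C.NegCut X := C.m_mem_negcut (by simp [hmem])
    (by simp [hmem, C.hμne x, hμxna])
  have hma : C.m a ∈ C.NegCut X := C.m_mem_negcut (by simp [hmem])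
    (by simp [hmem, ha'x, ha'a])
  have mxa : C.m x ≠ C.m a := fun hc =>
    (C.m_eq_cases hc).elim (fun h => hax h.symm) (fun h => haμx h)
  have hneg : 2 ≤ (C.NegCut X).card := by
    have hsub : ({C.m x, C.m a} : Finset E) ⊆ C.NegCut X := by
      intro w hw; simp only [Finset.mem_insert, Finset.mem_singleton] at hw
      rcases hw with rfl|rfl <;> assumption
    have hc := Finset.card_le_card hsub
    rwa [Finset.card_pair mxa] at hc
  have hsubP : C.PosCut X ⊆ {g} ∪ C.Epar x (C.mu a) := by
    intro h hh
    obtain ⟨p, q, hpq, hp, hq, hpos⟩ := C.posCut_elim hh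
    have hσh : C.sg h = false := by
      simp only [Pos, Finset.mem_filter] at hpos; exact hpos.2.1
    rcases (hmem p).mp hp with rfl|rfl
    · -- p = x : other endpoint is a or mu a ; a ∈ X so it is mu a
      rcases C.L1 hnd he hee hσh hpq with rfl | rfl
      · exact absurd ((hmem q).mpr (Or.inr rfl)) hq
      · exact Finset.mem_union_right _ (by simp [Epar, hσh, hpq])
    · -- p = a : h ∈ Pos a = {e, g}
      have : h ∈ C.Pos p := hpos
      rw [← hPosa] at this
      simp only [Finset.mem_insert, Finset.mem_singleton] at this
      rcases this with rfl|rfl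
      · -- h = e : but e does not cross
        exfalso
        rcases sym2_other (hee.symm.trans hpq) with ⟨h4, _⟩|⟨h4, _⟩
        · exact hax h4
        · exact hq ((hmem q).mpr (Or.inl h4.symm))
      · exact Finset.mem_union_left _ (by simp)
  have hEparle : (C.Epar x (C.mu a)).card ≤ 1 := by
    apply Finset.card_le_one.mpr
    intro w hw w' hw'
    simp only [Epar, Finset.mem_filter] at hw hw'
    exact C.Epar_le_one hμxa' w w' hw.2.1 hw.2.2 hw'.2.1 hw'.2.2
  have hEparne : ∃ e', e' ∈ C.Epar x (C.mu a) := by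
    by_contra hce
    push_neg at hce
    have hem : C.Epar x (C.mu a) = ∅ := Finset.eq_empty_of_forall_notMem hce
    have := Finset.card_le_card hsubP
    have h1 := C.hcutF X
    rw [hem] at this
    simp at this
    omega
  obtain ⟨e', he'⟩ := hEparne
  simp only [Epar, Finset.mem_filter] at he'
  obtain ⟨-, he'σ, he'e⟩ := he'
  -- Pos x = {e, e'} and Pos (mu a) = {g, e'}
  have hee'ne : e ≠ e' := by
    intro hc
    rw [hc, he'e] at hee
    exact ha'a (sym2_cancel hee hax)
  have hge' : g ≠ e' := by
    intro hc
    rw [hc, he'e] at hge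
    rcases Sym2.eq_iff.mp hge with ⟨h1, _⟩ | ⟨_, h1⟩
    · exact hax h1
    · exact ha'a h1
  have hPosx : ({e, e'} : Finset E) = C.Pos x := by
    refine Finset.eq_of_subset_of_card_le ?_ ?_
    · intro w hw
      simp only [Finset.mem_insert, Finset.mem_singleton] at hw
      rcases hw with rfl|rfl
      · simp [Pos, he, hee]
      · simp [Pos, he'σ, he'e]
    · rw [Finset.card_pair hee'ne]; exact C.hpos2 x
  have hPosa' : ({g, e'} : Finset E) = C.Pos (C.mu a) := by
    refine Finset.eq_of_subset_of_card_le ?_ ?_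
    · intro w hw
      simp only [Finset.mem_insert, Finset.mem_singleton] at hw
      rcases hw with rfl|rfl
      · simp [Pos, hg, hge]
      · simp [Pos, he'σ, he'e]
    · rw [Finset.card_pair hge']; exact C.hpos2 (C.mu a)
  -- 2-edge-connectivity fails at {x, a, mu a}
  set Y : Set V := {x, a, C.mu a} with hY
  have hmemY : ∀ p : V, p ∈ Y ↔ p = x ∨ p = a ∨ p = C.mu a := by intro p; simp [hY]
  have hYne : Y.Nonempty := ⟨x, by simp [hmemY]⟩
  have hYcne : Yᶜ.Nonempty := by
    refine ⟨C.mu x, ?_⟩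
    simp only [Set.mem_compl_iff, hmemY]
    push_neg
    exact ⟨fun hc => C.hμne x hc, fun hc => haμx hc.symm, hμxa'⟩
  have hcutsub : C.CutAll Y ⊆ {C.m x} := by
    intro h hh
    obtain ⟨p, q, hpq, hp, hq⟩ := C.cutAll_elim hh
    rcases Bool.eq_false_or_eq_true (C.sg h) with hσ | hσ
    · -- negative crossing edge : must be m x
      obtain ⟨hmp, hqmu⟩ := C.neg_ends hσ hpq
      rcases (hmemY p).mp hp with rfl|rfl|rfl
      · simp [hmp]
      · exact absurd ((hmemY q).mpr (Or.inr (Or.inr hqmu))) hq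
      · exact absurd ((hmemY q).mpr (Or.inr (Or.inl (hqmu.trans (C.hμμ a))))) hq
    · -- positive crossing edge : impossible
      exfalso
      have hhp : h ∈ C.Pos p := by simp [Pos, hσ, hpq]
      rcases (hmemY p).mp hp with rfl|rfl|rfl
      · rw [← hPosx] at hhp
        simp only [Finset.mem_insert, Finset.mem_singleton] at hhp
        rcases hhp with rfl|rfl
        · rcases sym2_other (hpq.symm.trans hee) with ⟨_, h5⟩|⟨h4, _⟩
          · exact hq ((hmemY q).mpr (Or.inr (Or.inl h5)))
          · exact hax h4
        · rcases sym2_other (hpq.symm.trans he'e) with ⟨_, h5⟩|⟨h4, _⟩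
          · exact hq ((hmemY q).mpr (Or.inr (Or.inr h5)))
          · exact ha'x h4.symm
      · rw [← hPosa] at hhp
        simp only [Finset.mem_insert, Finset.mem_singleton] at hhp
        rcases hhp with rfl|rfl
        · rcases sym2_other (hpq.symm.trans hee) with ⟨h4, _⟩|⟨_, h5⟩
          · exact hax h4.symm
          · exact hq ((hmemY q).mpr (Or.inl h5))
        · rcases sym2_other (hpq.symm.trans hge) with ⟨_, h5⟩|⟨h4, _⟩
          · exact hq ((hmemY q).mpr (Or.inr (Or.inr h5)))
          · exact ha'a h4.symm
      · rw [← hPosa'] at hhp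
        simp only [Finset.mem_insert, Finset.mem_singleton] at hhp
        rcases hhp with rfl|rfl
        · rcases sym2_other (hpq.symm.trans hge) with ⟨h4, _⟩|⟨_, h5⟩
          · exact ha'a h4
          · exact hq ((hmemY q).mpr (Or.inr (Or.inl h5)))
        · rcases sym2_other (hpq.symm.trans he'e) with ⟨h4, _⟩|⟨_, h5⟩
          · exact ha'x h4
          · exact hq ((hmemY q).mpr (Or.inl h5))
  have hle := Finset.card_le_card hcutsub
  rw [Finset.card_singleton] at hle
  have := C.h2ecF Y hYne hYcne
  omega


/-- neighbours of the attached pair are confined to the original pair -/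
lemma L1' {x a z : V} (hnd : C.NoDigon x) {e : E} (he : C.sg e = false)
    (hee : C.ends e = s(x,a)) {f : E} (hf : C.sg f = false)
    (hfe : C.ends f = s(a,z)) : z = x ∨ z = C.mu x := by
  rcases C.L2 hnd he hee hf hfe with h | h | h
  · exact Or.inl h
  · exact Or.inr h
  · exact absurd (hfe.trans (by rw [h])) (C.ND hnd he hee f hf)

/-- The main structural lemma: a non-digon vertex forces the `K₄` structure. -/
lemma k4_of_nodigon (u : V) (hnd : C.NoDigon u) :
    ∃ (φ : V ≃ Fin 4) (ψ : E ≃ Fin 6),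
      (∀ e : E, Sym2.map φ (C.ends e) = k4ends (ψ e)) ∧
      (∀ e : E, C.sg e = k4sign (ψ e)) := by
  set v := C.mu u with hv
  have hndv : C.NoDigon v := C.nodigon_mu hnd
  have hvu : v ≠ u := C.hμne u
  have hμv : C.mu v = u := C.hμμ u
  -- the positive edge e2 at u, going to a
  obtain ⟨e2, he2⟩ := Finset.card_pos.mp (by simp only [Pos]; have := C.hpos1 u; omega : 0 < (C.Pos u).card)
  obtain ⟨a, hau, he2e⟩ := C.pos_other he2
  have he2σ : C.sg e2 = false := by
    simp only [Pos, Finset.mem_filter] at he2; exact he2.2.1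
  set b := C.mu a with hb
  have hav : a ≠ v := fun hc => hnd e2 he2σ (by rw [he2e, hc])
  have hba : b ≠ a := C.hμne a
  have hbu : b ≠ u := fun hc => hav (by rw [← C.hμμ a, ← hb, hc, ← hv])
  have hbv : b ≠ v := by
    intro hc
    have h1 : C.mu b = C.mu v := by rw [hc]
    rw [hb, C.hμμ, hμv] at h1
    exact hau h1
  have hμab : C.mu a = b := rfl
  have hμb : C.mu b = a := C.hμμ a
  have hnda : C.NoDigon a := C.ND hnd he2σ he2e
  -- neighbour confinements
  have L1u : ∀ {h : E} {z : V}, C.sg h = false → C.ends h = s(u,z) → z = a ∨ z = b :=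
    fun hσ hz => C.L1 hnd he2σ he2e hσ hz
  have L1'a : ∀ {h : E} {z : V}, C.sg h = false → C.ends h = s(a,z) → z = u ∨ z = v :=
    fun hσ hz => C.L1' hnd he2σ he2e hσ hz
  -- the positive edge at v
  obtain ⟨ec, hec⟩ := Finset.card_pos.mp (by simp only [Pos]; have := C.hpos1 v; omega : 0 < (C.Pos v).card)
  obtain ⟨c, hcv, hece⟩ := C.pos_other hec
  have hecσ : C.sg ec = false := by
    simp only [Pos, Finset.mem_filter] at hec; exact hec.2.1
  have hcu : c ≠ u := fun hc => hndv ec hecσ (by rw [hece, hc, hμv])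
  -- the other end of v's positive edge lies in the pair {a, b}
  have hpair2 : ∀ x y : V, x ∈ ({x, y} : Set V) := fun x y => by simp
  have hpair2' : ∀ x y : V, y ∈ ({x, y} : Set V) := fun x y => by simp
  have hcab : c = a ∨ c = b := by
    by_contra hcon
    push_neg at hcon
    obtain ⟨hca, hcb⟩ := hcon
    have hnoav : ∀ h : E, C.sg h = false → C.ends h ≠ s(a, v) := by
      intro h hσ hhe
      have hhe' : C.ends h = s(v, a) := by rw [hhe, Sym2.eq_swap]
      rcases C.L1 hndv hecσ hece hσ hhe' with h1 | h1
      · exact hca h1.symm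
      · exact hcb (by rw [hb, h1, C.hμμ])
    -- cut at {u, a}
    set X : Set V := {u, a} with hX
    have hmu_mem : C.m u ∈ C.NegCut X := C.m_mem_negcut (hpair2 u a)
      (by simp [hX]; rw [← hv]; exact ⟨hvu, hav.symm⟩)
    have hma_mem : C.m a ∈ C.NegCut X := C.m_mem_negcut (hpair2' u a)
      (by simp [hX, hμab, hbu, hba])
    have hmne : C.m u ≠ C.m a := fun hc =>
      (C.m_eq_cases hc).elim (fun h => hau h) (fun h => hav (h.trans hv.symm))
    have hneg : 2 ≤ (C.NegCut X).card := by
      have hsub : ({C.m u, C.m a} : Finset E) ⊆ C.NegCut X := by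
        intro w hw; simp only [Finset.mem_insert, Finset.mem_singleton] at hw
        rcases hw with rfl|rfl <;> assumption
      have hc := Finset.card_le_card hsub
      rwa [Finset.card_pair hmne] at hc
    have hsubP : C.PosCut X ⊆ C.Epar u b := by
      intro h hh
      obtain ⟨p, q, hpq, hp, hq, hpos⟩ := C.posCut_elim hh
      have hσh : C.sg h = false := by
        simp only [Pos, Finset.mem_filter] at hpos; exact hpos.2.1
      have hp' : p = u ∨ p = a := by simpa [hX] using hp
      rcases hp' with hp1|hp1
      · rw [hp1] at hpq
        rcases L1u hσh hpq with hq1 | hq1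
        · exact absurd (by rw [hq1]; exact hpair2' u a) hq
        · simp [Epar, hσh, hpq, hq1]
      · rw [hp1] at hpq
        rcases L1'a hσh hpq with hq1 | hq1
        · exact absurd (by rw [hq1]; exact hpair2 u a) hq
        · exact absurd (by rw [hpq, hq1] : C.ends h = s(a,v)) (hnoav h hσh)
    have hEle : (C.Epar u b).card ≤ 1 := Finset.card_le_one.mpr (by
      intro w hw w' hw'
      simp only [Epar, Finset.mem_filter] at hw hw'
      exact C.Epar_le_one (show C.mu u ≠ b by rw [← hv]; exact hbv.symm)
        w w' hw.2.1 hw.2.2 hw'.2.1 hw'.2.2)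
    have h1 := Finset.card_le_card hsubP
    have h2 := C.hcutF X
    omega
  have L1v : ∀ {h : E} {z : V}, C.sg h = false → C.ends h = s(v,z) → z = a ∨ z = b := by
    intro h z hσ hz
    rcases hcab with rfl | rfl
    · exact C.L1 hndv hecσ hece hσ hz
    · rcases C.L1 hndv hecσ hece hσ hz with h1 | h1
      · exact Or.inr h1
      · exact Or.inl (by rw [h1, hb, C.hμμ])
  -- b is positively attached to u or v
  have hbuv : ∃ h : E, C.sg h = false ∧ (C.ends h = s(b, u) ∨ C.ends h = s(b, v)) := by
    by_contra hb8
    set X3 : Set V := {u, v, a} with hX3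
    have hmemX3 : ∀ p : V, p ∈ X3 ↔ p = u ∨ p = v ∨ p = a := by intro p; simp [hX3]
    have hma3 : C.m a ∈ C.NegCut X3 := C.m_mem_negcut ((hmemX3 a).mpr (Or.inr (Or.inr rfl)))
      (by rw [hμab]; simp [hmemX3, hbu, hbv, hba])
    have hpos0 : C.PosCut X3 = ∅ := by
      apply Finset.eq_empty_of_forall_notMem
      intro h hh
      obtain ⟨p, q, hpq, hp, hq, hpos⟩ := C.posCut_elim hh
      have hσh : C.sg h = false := by
        simp only [Pos, Finset.mem_filter] at hpos; exact hpos.2.1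
      rcases (hmemX3 p).mp hp with rfl|rfl|rfl
      · rcases L1u hσh hpq with hq1 | hq1
        · exact hq ((hmemX3 q).mpr (Or.inr (Or.inr hq1)))
        · exact hb8 ⟨h, hσh, Or.inl (by rw [hpq, hq1]; exact Sym2.eq_swap)⟩
      · rcases L1v hσh hpq with hq1 | hq1
        · exact hq ((hmemX3 q).mpr (Or.inr (Or.inr hq1)))
        · exact hb8 ⟨h, hσh, Or.inr (by rw [hpq, hq1]; exact Sym2.eq_swap)⟩
      · rcases L1'a hσh hpq with hq1 | hq1
        · exact hq ((hmemX3 q).mpr (Or.inl hq1))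
        · exact hq ((hmemX3 q).mpr (Or.inr (Or.inl hq1)))
    have h1 := C.hcutF X3
    rw [hpos0] at h1
    simp only [Finset.card_empty, Nat.le_zero] at h1
    have h2 : 0 < (C.NegCut X3).card := Finset.card_pos.mpr ⟨C.m a, hma3⟩
    omega
  obtain ⟨h0, hσ0, hor0⟩ := hbuv
  have L1'b : ∀ {h : E} {z : V}, C.sg h = false → C.ends h = s(b,z) → z = u ∨ z = v := by
    intro h z hσ hz
    rcases hor0 with h0e | h0e
    · have h0e' : C.ends h0 = s(u, b) := by rw [h0e, Sym2.eq_swap]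
      rcases C.L1' hnd hσ0 h0e' hσ hz with h1 | h1
      · exact Or.inl h1
      · exact Or.inr (by rw [h1, hv])
    · have h0e' : C.ends h0 = s(v, b) := by rw [h0e, Sym2.eq_swap]
      rcases C.L1' hndv hσ0 h0e' hσ hz with h1 | h1
      · exact Or.inr h1
      · exact Or.inl (h1.trans hμv)
  -- the graph has exactly the four vertices u, v, a, b
  have hall : ∀ z : V, z = u ∨ z = v ∨ z = a ∨ z = b := by
    by_contra hcz
    push_neg at hcz
    obtain ⟨z0, hz1, hz2, hz3, hz4⟩ := hcz
    set X4 : Set V := {u, v, a, b} with hX4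
    have hmemX4 : ∀ p : V, p ∈ X4 ↔ p = u ∨ p = v ∨ p = a ∨ p = b := by intro p; simp [hX4]
    have hne : X4.Nonempty := ⟨u, (hmemX4 u).mpr (Or.inl rfl)⟩
    have hcne : X4ᶜ.Nonempty := ⟨z0, by
      simp only [Set.mem_compl_iff, hmemX4]
      push_neg
      exact ⟨hz1, hz2, hz3, hz4⟩⟩
    have hcut0 : C.CutAll X4 = ∅ := by
      apply Finset.eq_empty_of_forall_notMem
      intro h hh
      obtain ⟨p, q, hpq, hp, hq⟩ := C.cutAll_elim hh
      rcases Bool.eq_false_or_eq_true (C.sg h) with hσ | hσ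
      · obtain ⟨-, hqm⟩ := C.neg_ends hσ hpq
        rcases (hmemX4 p).mp hp with rfl|rfl|rfl|rfl
        · exact hq ((hmemX4 q).mpr (Or.inr (Or.inl (by rw [hqm, ← hv]))))
        · exact hq ((hmemX4 q).mpr (Or.inl (by rw [hqm, hμv])))
        · exact hq ((hmemX4 q).mpr (Or.inr (Or.inr (Or.inr (by rw [hqm, hμab])))))
        · exact hq ((hmemX4 q).mpr (Or.inr (Or.inr (Or.inl (by rw [hqm, hμb])))))
      · rcases (hmemX4 p).mp hp with rfl|rfl|rfl|rfl
        · rcases L1u hσ hpq with hq1 | hq1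
          · exact hq ((hmemX4 q).mpr (Or.inr (Or.inr (Or.inl hq1))))
          · exact hq ((hmemX4 q).mpr (Or.inr (Or.inr (Or.inr hq1))))
        · rcases L1v hσ hpq with hq1 | hq1
          · exact hq ((hmemX4 q).mpr (Or.inr (Or.inr (Or.inl hq1))))
          · exact hq ((hmemX4 q).mpr (Or.inr (Or.inr (Or.inr hq1))))
        · rcases L1'a hσ hpq with hq1 | hq1
          · exact hq ((hmemX4 q).mpr (Or.inl hq1))
          · exact hq ((hmemX4 q).mpr (Or.inr (Or.inl hq1)))
        · rcases L1'b hσ hpq with hq1 | hq1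
          · exact hq ((hmemX4 q).mpr (Or.inl hq1))
          · exact hq ((hmemX4 q).mpr (Or.inr (Or.inl hq1)))
    have h1 := C.h2ecF X4 hne hcne
    rw [hcut0] at h1
    simp at h1
  -- extract the four positive edges
  have negpair : ∀ (x y : V), x ≠ y → C.mu x ∉ ({x,y} : Set V) → C.mu y ∉ ({x,y} : Set V) →
      y ≠ C.mu x → 2 ≤ (C.NegCut {x,y}).card := by
    intro x y hxy hmx hmy hyx
    have h1 : C.m x ∈ C.NegCut {x,y} := C.m_mem_negcut (hpair2 x y) hmx
    have h2 : C.m y ∈ C.NegCut {x,y} := C.m_mem_negcut (hpair2' x y) hmy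
    have h3 : C.m x ≠ C.m y := fun hc =>
      (C.m_eq_cases hc).elim (fun h => hxy h.symm) (fun h => hyx h)
    have hsub : ({C.m x, C.m y} : Finset E) ⊆ C.NegCut {x,y} := by
      intro w hw; simp only [Finset.mem_insert, Finset.mem_singleton] at hw
      rcases hw with rfl|rfl <;> assumption
    have hc := Finset.card_le_card hsub
    rwa [Finset.card_pair h3] at hc
  have hEuble : (C.Epar u b).card ≤ 1 := Finset.card_le_one.mpr (by
    intro w hw w' hw'
    simp only [Epar, Finset.mem_filter] at hw hw'
    exact C.Epar_le_one (show C.mu u ≠ b by rw [← hv]; exact hbv.symm)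
      w w' hw.2.1 hw.2.2 hw'.2.1 hw'.2.2)
  have hEavle : (C.Epar a v).card ≤ 1 := Finset.card_le_one.mpr (by
    intro w hw w' hw'
    simp only [Epar, Finset.mem_filter] at hw hw'
    exact C.Epar_le_one (show C.mu a ≠ v by rw [hμab]; exact hbv)
      w w' hw.2.1 hw.2.2 hw'.2.1 hw'.2.2)
  have hEuale : (C.Epar u a).card ≤ 1 := Finset.card_le_one.mpr (by
    intro w hw w' hw'
    simp only [Epar, Finset.mem_filter] at hw hw'
    exact C.Epar_le_one (show C.mu u ≠ a by rw [← hv]; exact hav.symm)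
      w w' hw.2.1 hw.2.2 hw'.2.1 hw'.2.2)
  have hEbvle : (C.Epar b v).card ≤ 1 := Finset.card_le_one.mpr (by
    intro w hw w' hw'
    simp only [Epar, Finset.mem_filter] at hw hw'
    exact C.Epar_le_one (show C.mu b ≠ v by rw [hμb]; exact hav)
      w w' hw.2.1 hw.2.2 hw'.2.1 hw'.2.2)
  -- cut {u, a} : produces e3 : u-b and e4 : a-v
  have hneg1 : 2 ≤ (C.NegCut {u, a}).card := by
    apply negpair u a hau.symm
    · simp; rw [← hv]; exact ⟨hvu, hav.symm⟩
    · simp [hμab, hbu, hba]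
    · rw [← hv]; exact hav
  have hsubP1 : C.PosCut {u, a} ⊆ C.Epar u b ∪ C.Epar a v := by
    intro h hh
    obtain ⟨p, q, hpq, hp, hq, hpos⟩ := C.posCut_elim hh
    have hσh : C.sg h = false := by
      simp only [Pos, Finset.mem_filter] at hpos; exact hpos.2.1
    have hp' : p = u ∨ p = a := by simpa using hp
    rcases hp' with hp1|hp1
    · rw [hp1] at hpq
      rcases L1u hσh hpq with hq1 | hq1
      · exact absurd (by rw [hq1]; exact hpair2' u a) hq
      · exact Finset.mem_union_left _ (by simp [Epar, hσh, hpq, hq1])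
    · rw [hp1] at hpq
      rcases L1'a hσh hpq with hq1 | hq1
      · exact absurd (by rw [hq1]; exact hpair2 u a) hq
      · exact Finset.mem_union_right _ (by simp [Epar, hσh, hpq, hq1])
  have hcount1 : 2 ≤ (C.Epar u b).card + (C.Epar a v).card := by
    have h1 := Finset.card_le_card hsubP1
    have h2 := C.hcutF {u, a}
    have h3 := Finset.card_union_le (C.Epar u b) (C.Epar a v)
    omega
  obtain ⟨e3, he3⟩ := Finset.card_pos.mp (by omega : 0 < (C.Epar u b).card)
  obtain ⟨e4, he4⟩ := Finset.card_pos.mp (by omega : 0 < (C.Epar a v).card)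
  simp only [Epar, Finset.mem_filter] at he3 he4
  obtain ⟨-, he3σ, he3e⟩ := he3
  obtain ⟨-, he4σ, he4e⟩ := he4
  -- cut {u, b} : produces e5 : b-v
  have hneg2 : 2 ≤ (C.NegCut {u, b}).card := by
    apply negpair u b hbu.symm
    · simp; rw [← hv]; exact ⟨hvu, hbv.symm⟩
    · simp [hμb, hau, hba.symm]
    · rw [← hv]; exact hbv
  have hsubP2 : C.PosCut {u, b} ⊆ C.Epar u a ∪ C.Epar b v := by
    intro h hh
    obtain ⟨p, q, hpq, hp, hq, hpos⟩ := C.posCut_elim hh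
    have hσh : C.sg h = false := by
      simp only [Pos, Finset.mem_filter] at hpos; exact hpos.2.1
    have hp' : p = u ∨ p = b := by simpa using hp
    rcases hp' with hp1|hp1
    · rw [hp1] at hpq
      rcases L1u hσh hpq with hq1 | hq1
      · exact Finset.mem_union_left _ (by simp [Epar, hσh, hpq, hq1])
      · exact absurd (by rw [hq1]; exact hpair2' u b) hq
    · rw [hp1] at hpq
      rcases L1'b hσh hpq with hq1 | hq1
      · exact absurd (by rw [hq1]; exact hpair2 u b) hq
      · exact Finset.mem_union_right _ (by simp [Epar, hσh, hpq, hq1])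
  have hcount2 : 2 ≤ (C.Epar u a).card + (C.Epar b v).card := by
    have h1 := Finset.card_le_card hsubP2
    have h2 := C.hcutF {u, b}
    have h3 := Finset.card_union_le (C.Epar u a) (C.Epar b v)
    omega
  obtain ⟨e5, he5⟩ := Finset.card_pos.mp (by omega : 0 < (C.Epar b v).card)
  simp only [Epar, Finset.mem_filter] at he5
  obtain ⟨-, he5σ, he5e⟩ := he5
  -- uniqueness of the positive edges
  have uniq2 : ∀ h : E, C.sg h = false → C.ends h = s(u,a) → h = e2 :=
    fun h hσ hz => C.Epar_le_one (show C.mu u ≠ a by rw [← hv]; exact hav.symm)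
      h e2 hσ hz he2σ he2e
  have uniq3 : ∀ h : E, C.sg h = false → C.ends h = s(u,b) → h = e3 :=
    fun h hσ hz => C.Epar_le_one (show C.mu u ≠ b by rw [← hv]; exact hbv.symm)
      h e3 hσ hz he3σ he3e
  have uniq4 : ∀ h : E, C.sg h = false → C.ends h = s(a,v) → h = e4 :=
    fun h hσ hz => C.Epar_le_one (show C.mu a ≠ v by rw [hμab]; exact hbv)
      h e4 hσ hz he4σ he4e
  have uniq5 : ∀ h : E, C.sg h = false → C.ends h = s(b,v) → h = e5 :=
    fun h hσ hz => C.Epar_le_one (show C.mu b ≠ v by rw [hμb]; exact hav)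
      h e5 hσ hz he5σ he5e
  -- classification of all edges
  have hclass : ∀ h : E, h = C.m u ∨ h = C.m a ∨ h = e2 ∨ h = e3 ∨ h = e4 ∨ h = e5 := by
    intro h
    obtain ⟨p, q, hpq⟩ := sym2_rep (C.ends h)
    rcases Bool.eq_false_or_eq_true (C.sg h) with hσ | hσ
    · have hmp := (C.neg_ends hσ hpq).1
      rcases hall p with rfl|rfl|rfl|rfl
      · exact Or.inl hmp
      · exact Or.inl (hmp.trans (by rw [hv]; exact C.m_mu u))
      · exact Or.inr (Or.inl hmp)
      · exact Or.inr (Or.inl (hmp.trans (by rw [hb]; exact C.m_mu a)))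
    · rcases hall p with rfl|rfl|rfl|rfl
      · rcases L1u hσ hpq with hq1 | hq1
        · exact Or.inr (Or.inr (Or.inl (uniq2 h hσ (by rw [hpq, hq1]))))
        · exact Or.inr (Or.inr (Or.inr (Or.inl (uniq3 h hσ (by rw [hpq, hq1])))))
      · rcases L1v hσ hpq with hq1 | hq1
        · exact Or.inr (Or.inr (Or.inr (Or.inr (Or.inl
            (uniq4 h hσ (by rw [hpq, hq1]; exact Sym2.eq_swap))))))
        · exact Or.inr (Or.inr (Or.inr (Or.inr (Or.inr
            (uniq5 h hσ (by rw [hpq, hq1]; exact Sym2.eq_swap))))))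
      · rcases L1'a hσ hpq with hq1 | hq1
        · exact Or.inr (Or.inr (Or.inl (uniq2 h hσ (by rw [hpq, hq1]; exact Sym2.eq_swap))))
        · exact Or.inr (Or.inr (Or.inr (Or.inr (Or.inl (uniq4 h hσ (by rw [hpq, hq1]))))))
      · rcases L1'b hσ hpq with hq1 | hq1
        · exact Or.inr (Or.inr (Or.inr (Or.inl (uniq3 h hσ (by rw [hpq, hq1]; exact Sym2.eq_swap)))))
        · exact Or.inr (Or.inr (Or.inr (Or.inr (Or.inr (uniq5 h hσ (by rw [hpq, hq1]))))))
  -- distinctness of the six edges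
  have ee0 : C.ends (C.m u) = s(u, v) := by rw [C.hmends, ← hv]
  have ee1 : C.ends (C.m a) = s(a, b) := by rw [C.hmends, ← hb]
  have hsgn : ∀ h : E, C.sg h = false → h ≠ C.m u ∧ h ≠ C.m a := by
    intro h hσ
    constructor
    · intro hc; rw [hc, C.hmσ u] at hσ; simp at hσ
    · intro hc; rw [hc, C.hmσ a] at hσ; simp at hσ
  have hm_ua : C.m u ≠ C.m a := fun hc =>
    (C.m_eq_cases hc).elim (fun h => hau h) (fun h => hav (h.trans hv.symm))
  have d23 : e2 ≠ e3 := by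
    intro hc
    rw [hc] at he2e
    have := sym2_cancel (he2e.symm.trans he3e) (Ne.symm hbu)
    exact hba this.symm
  have d24 : e2 ≠ e4 := by
    intro hc
    rw [hc] at he2e
    rcases sym2_other (he2e.symm.trans he4e) with ⟨h1, _⟩|⟨h1, _⟩
    · exact hau h1.symm
    · exact hvu h1.symm
  have d25 : e2 ≠ e5 := by
    intro hc
    rw [hc] at he2e
    rcases sym2_other (he2e.symm.trans he5e) with ⟨h1, _⟩|⟨h1, _⟩
    · exact hbu h1.symm
    · exact hvu h1.symm
  have d34 : e3 ≠ e4 := by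
    intro hc
    rw [hc] at he3e
    rcases sym2_other (he3e.symm.trans he4e) with ⟨h1, _⟩|⟨h1, _⟩
    · exact hau h1.symm
    · exact hvu h1.symm
  have d35 : e3 ≠ e5 := by
    intro hc
    rw [hc] at he3e
    rcases sym2_other (he3e.symm.trans he5e) with ⟨h1, _⟩|⟨h1, _⟩
    · exact hbu h1.symm
    · exact hvu h1.symm
  have d45 : e4 ≠ e5 := by
    intro hc
    rw [hc] at he4e
    rcases sym2_other (he4e.symm.trans he5e) with ⟨h1, _⟩|⟨h1, _⟩
    · exact hba h1.symm
    · exact hav h1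
  have hs2 := hsgn e2 he2σ
  have hs3 := hsgn e3 he3σ
  have hs4 := hsgn e4 he4σ
  have hs5 := hsgn e5 he5σ
  -- construct the vertex equivalence
  set gV : V → Fin 4 := fun z => if z = u then 0 else if z = v then 1 else if z = a then 2 else 3
    with hgV
  have hgVu : gV u = 0 := by simp [hgV]
  have hgVv : gV v = 1 := by simp [hgV, hvu]
  have hgVa : gV a = 2 := by simp [hgV, hau, hav]
  have hgVb : gV b = 3 := by simp [hgV, hbu, hbv, hba]
  have hbijV : Function.Bijective gV := by
    constructor
    · intro z1 z2 hz
      rcases hall z1 with rfl|rfl|rfl|rfl <;> rcases hall z2 with rfl|rfl|rfl|rfl <;>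
        simp only [hgVu, hgVv, hgVa, hgVb] at hz <;>
        first
          | rfl
          | exact absurd hz (by decide)
    · intro i
      fin_cases i
      exacts [⟨u, hgVu⟩, ⟨v, hgVv⟩, ⟨a, hgVa⟩, ⟨b, hgVb⟩]
  set φ : V ≃ Fin 4 := Equiv.ofBijective gV hbijV with hφ
  have hφu : φ u = 0 := hgVu
  have hφv : φ v = 1 := hgVv
  have hφa : φ a = 2 := hgVa
  have hφb : φ b = 3 := hgVb
  -- construct the edge equivalence
  set gE : E → Fin 6 := fun h => if h = C.m u then 0 else if h = C.m a then 1 else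
    if h = e2 then 2 else if h = e3 then 3 else if h = e4 then 4 else 5 with hgE
  have hgE0 : gE (C.m u) = 0 := by simp [hgE]
  have hgE1 : gE (C.m a) = 1 := by simp [hgE, Ne.symm hm_ua]
  have hgE2 : gE e2 = 2 := by simp [hgE, hs2.1, hs2.2]
  have hgE3 : gE e3 = 3 := by simp [hgE, hs3.1, hs3.2, Ne.symm d23]
  have hgE4 : gE e4 = 4 := by simp [hgE, hs4.1, hs4.2, Ne.symm d24, Ne.symm d34]
  have hgE5 : gE e5 = 5 := by
    simp [hgE, hs5.1, hs5.2, Ne.symm d25, Ne.symm d35, Ne.symm d45]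
  have hbijE : Function.Bijective gE := by
    constructor
    · intro z1 z2 hz
      rcases hclass z1 with rfl|rfl|rfl|rfl|rfl|rfl <;>
        rcases hclass z2 with rfl|rfl|rfl|rfl|rfl|rfl <;>
        simp only [hgE0, hgE1, hgE2, hgE3, hgE4, hgE5] at hz <;>
        first
          | rfl
          | exact absurd hz (by decide)
    · intro i
      fin_cases i
      exacts [⟨C.m u, hgE0⟩, ⟨C.m a, hgE1⟩, ⟨e2, hgE2⟩, ⟨e3, hgE3⟩, ⟨e4, hgE4⟩, ⟨e5, hgE5⟩]
  set ψ : E ≃ Fin 6 := Equiv.ofBijective gE hbijE with hψ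
  have hψ0 : ψ (C.m u) = 0 := hgE0
  have hψ1 : ψ (C.m a) = 1 := hgE1
  have hψ2 : ψ e2 = 2 := hgE2
  have hψ3 : ψ e3 = 3 := hgE3
  have hψ4 : ψ e4 = 4 := hgE4
  have hψ5 : ψ e5 = 5 := hgE5
  refine ⟨φ, ψ, ?_, ?_⟩
  · intro h
    rcases hclass h with rfl|rfl|rfl|rfl|rfl|rfl
    · rw [hψ0, ee0, Sym2.map_pair_eq, hφu, hφv]; decide
    · rw [hψ1, ee1, Sym2.map_pair_eq, hφa, hφb]; decide
    · rw [hψ2, he2e, Sym2.map_pair_eq, hφu, hφa]; decide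
    · rw [hψ3, he3e, Sym2.map_pair_eq, hφu, hφb]; decide
    · rw [hψ4, he4e, Sym2.map_pair_eq, hφa, hφv]; decide
    · rw [hψ5, he5e, Sym2.map_pair_eq, hφb, hφv]; decide
  · intro h
    rcases hclass h with rfl|rfl|rfl|rfl|rfl|rfl
    · rw [hψ0, C.hmσ u]; decide
    · rw [hψ1, C.hmσ a]; decide
    · rw [hψ2, he2σ]; decide
    · rw [hψ3, he3σ]; decide
    · rw [hψ4, he4σ]; decide
    · rw [hψ5, he5σ]; decide

end Ctx

/-- Let `(G, σ)` be a signed 2-edge-connected subcubic multigraph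
(given by an endpoint map `ends : E → Sym2 V` without loops) whose signature achieves
the frustration index, with `F(G, σ) = v(G)/2`.  Then either `(G, σ)` is
switching-isomorphic to `K₄` with a negative perfect matching, or every vertex lies
in a digon (a pair of parallel edges of opposite signs). -/
theorem half_frustrated_multigraph {V E : Type*} [Fintype V] [Fintype E]
    (ends : E → Sym2 V) (hloop : ∀ e : E, ¬ (ends e).IsDiag)
    (σ : E → Bool)
    (hsub : ∀ v : V, {e : E | v ∈ ends e}.ncard ≤ 3)
    (h2ec : ∀ X : Set V, X.Nonempty → Xᶜ.Nonempty →
      2 ≤ {e : E | sgnCross X (ends e) = true}.ncard)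
    (hach : {e : E | σ e = true}.ncard =
      ⨅ X : Set V, {e : E | xor (σ e) (sgnCross X (ends e)) = true}.ncard)
    (hhalf : 2 * {e : E | σ e = true}.ncard = Fintype.card V) :
    (∃ (φ : V ≃ Fin 4) (ψ : E ≃ Fin 6) (X : Set V),
      (∀ e : E, Sym2.map φ (ends e) = k4ends (ψ e)) ∧
      (∀ e : E, xor (σ e) (sgnCross X (ends e)) = k4sign (ψ e))) ∨
    (∀ v : V, ∃ e f : E, e ≠ f ∧ ends e = ends f ∧ v ∈ ends e ∧ σ e ≠ σ f) := by
  have hc1 : ∀ X : Set V, {e : E | xor (σ e) (sgnCross X (ends e)) = true}.ncard =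
      (Finset.univ.filter (fun e : E => xor (σ e) (sgnCross X (ends e)) = true)).card := by
    intro X; rw [Set.ncard_eq_toFinset_card', Set.toFinset_setOf]
  have hc2 : {e : E | σ e = true}.ncard =
      (Finset.univ.filter (fun e : E => σ e = true)).card := by
    rw [Set.ncard_eq_toFinset_card', Set.toFinset_setOf]
  have hc3 : ∀ v : V, {e : E | v ∈ ends e}.ncard =
      (Finset.univ.filter (fun e : E => v ∈ ends e)).card := by
    intro v; rw [Set.ncard_eq_toFinset_card', Set.toFinset_setOf]
  have hc4 : ∀ X : Set V, {e : E | sgnCross X (ends e) = true}.ncard =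
      (Finset.univ.filter (fun e : E => sgnCross X (ends e) = true)).card := by
    intro X; rw [Set.ncard_eq_toFinset_card', Set.toFinset_setOf]
  -- the cut inequality
  have hcut : ∀ X : Set V,
      (Finset.univ.filter (fun e => σ e = true ∧ sgnCross X (ends e) = true)).card ≤
      (Finset.univ.filter (fun e => σ e = false ∧ sgnCross X (ends e) = true)).card := by
    intro X
    have h0 : {e : E | σ e = true}.ncard ≤
        {e : E | xor (σ e) (sgnCross X (ends e)) = true}.ncard := by
      rw [hach]; exact ciInf_le (OrderBot.bddBelow _) X
    rw [hc2, hc1] at h0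
    have hsp := Finset.card_filter_add_card_filter_not
      (s := Finset.univ.filter fun e : E => σ e = true)
      (p := fun e => sgnCross X (ends e) = true)
    rw [Finset.filter_filter, Finset.filter_filter] at hsp
    have hxor : (Finset.univ.filter fun e : E => xor (σ e) (sgnCross X (ends e)) = true) =
        (Finset.univ.filter fun e => σ e = true ∧ ¬ sgnCross X (ends e) = true) ∪
        (Finset.univ.filter fun e => σ e = false ∧ sgnCross X (ends e) = true) := by
      rw [← Finset.filter_or]
      apply Finset.filter_congr
      intro e _
      cases hσe : σ e <;> cases hcr : sgnCross X (ends e) <;> simp [hσe, hcr]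
    have hdisj : Disjoint
        (Finset.univ.filter fun e : E => σ e = true ∧ ¬ sgnCross X (ends e) = true)
        (Finset.univ.filter fun e : E => σ e = false ∧ sgnCross X (ends e) = true) := by
      rw [Finset.disjoint_left]
      intro e h1 h2
      simp only [Finset.mem_filter] at h1 h2
      rw [h1.2.1] at h2
      exact absurd h2.2.1 (by simp)
    rw [hxor, Finset.card_union_of_disjoint hdisj] at h0
    omega
  -- degree bound
  have hdeg : ∀ v : V,
      (Finset.univ.filter (fun e => σ e = true ∧ v ∈ ends e)).card +
      (Finset.univ.filter (fun e => σ e = false ∧ v ∈ ends e)).card ≤ 3 := by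
    intro v
    have hsp := Finset.card_filter_add_card_filter_not
      (s := Finset.univ.filter fun e : E => v ∈ ends e)
      (p := fun e => σ e = true)
    rw [Finset.filter_filter, Finset.filter_filter] at hsp
    have e1 : (Finset.univ.filter fun e : E => v ∈ ends e ∧ σ e = true) =
        (Finset.univ.filter fun e : E => σ e = true ∧ v ∈ ends e) := by
      apply Finset.filter_congr; intro e _; exact and_comm
    have e2 : (Finset.univ.filter fun e : E => v ∈ ends e ∧ ¬ σ e = true) =
        (Finset.univ.filter fun e : E => σ e = false ∧ v ∈ ends e) := by
      apply Finset.filter_congr; intro e _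
      cases hσe : σ e <;> simp [hσe, and_comm]
    rw [e1, e2] at hsp
    have h3 := hsub v
    rw [hc3] at h3
    omega
  -- singleton cuts
  have hsingle : ∀ (v : V) (e : E), (sgnCross {v} (ends e) = true) ↔ v ∈ ends e := by
    intro v e
    obtain ⟨x, y, hxy⟩ := sym2_rep (ends e)
    have hne : x ≠ y := by
      have := hloop e; rw [hxy] at this; simpa [Sym2.isDiag_iff_proj_eq] using this
    rw [hxy, cross_mk_iff, Sym2.mem_iff]
    constructor
    · rintro (⟨h1, _⟩ | ⟨h1, _⟩)
      · exact Or.inl (Set.mem_singleton_iff.mp h1).symm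
      · exact Or.inr (Set.mem_singleton_iff.mp h1).symm
    · rintro (rfl | rfl)
      · exact Or.inl ⟨Set.mem_singleton _, fun hy => hne (Set.mem_singleton_iff.mp hy).symm⟩
      · exact Or.inr ⟨Set.mem_singleton _, fun hx => hne (Set.mem_singleton_iff.mp hx)⟩
  have hNcut : ∀ v : V, (Finset.univ.filter (fun e => σ e = true ∧ v ∈ ends e)).card ≤
      (Finset.univ.filter (fun e => σ e = false ∧ v ∈ ends e)).card := by
    intro v
    have h0 := hcut {v}
    have e1 : (Finset.univ.filter fun e : E => σ e = true ∧ sgnCross {v} (ends e) = true) =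
        (Finset.univ.filter fun e : E => σ e = true ∧ v ∈ ends e) := by
      apply Finset.filter_congr; intro e _
      rw [hsingle v e]
    have e2 : (Finset.univ.filter fun e : E => σ e = false ∧ sgnCross {v} (ends e) = true) =
        (Finset.univ.filter fun e : E => σ e = false ∧ v ∈ ends e) := by
      apply Finset.filter_congr; intro e _
      rw [hsingle v e]
    rwa [e1, e2] at h0
  -- handshake
  have htwo : ∀ e : E, (Finset.univ.filter (fun v : V => v ∈ ends e)).card = 2 := by
    intro e
    obtain ⟨x, y, hxy⟩ := sym2_rep (ends e)
    have hne : x ≠ y := by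
      have := hloop e; rw [hxy] at this; simpa [Sym2.isDiag_iff_proj_eq] using this
    have hfe : (Finset.univ.filter (fun v : V => v ∈ ends e)) = {x, y} := by
      ext z
      simp [hxy, Sym2.mem_iff]
    rw [hfe, Finset.card_pair hne]
  have hhand : ∑ v ∈ Finset.univ, (Finset.univ.filter
        (fun e => σ e = true ∧ v ∈ ends e)).card =
      2 * (Finset.univ.filter (fun e : E => σ e = true)).card := by
    have h1 : ∀ v : V, (Finset.univ.filter (fun e => σ e = true ∧ v ∈ ends e)).card =
        ∑ e ∈ Finset.univ.filter (fun e : E => σ e = true),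
          (if v ∈ ends e then 1 else 0) := by
      intro v
      rw [← Finset.filter_filter, Finset.card_filter]
    rw [Finset.sum_congr rfl (fun v _ => h1 v), Finset.sum_comm]
    have h2 : ∀ e : E, (∑ v ∈ Finset.univ, if v ∈ ends e then 1 else 0) = 2 := by
      intro e
      rw [← Finset.card_filter]
      exact htwo e
    rw [Finset.sum_congr rfl (fun e _ => h2 e), Finset.sum_const, smul_eq_mul, mul_comm]
  have hhalf' : 2 * (Finset.univ.filter (fun e : E => σ e = true)).card = Fintype.card V := by
    have h3 := hhalf
    rwa [hc2] at h3
  have hle1 : ∀ v : V, (Finset.univ.filter (fun e => σ e = true ∧ v ∈ ends e)).card ≤ 1 := by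
    intro v
    have h1 := hNcut v
    have h2 := hdeg v
    omega
  have hone : ∀ v : V, (Finset.univ.filter (fun e => σ e = true ∧ v ∈ ends e)).card = 1 := by
    by_contra hc
    push_neg at hc
    obtain ⟨v0, hne0⟩ := hc
    have hlt : ∑ v ∈ Finset.univ, (Finset.univ.filter
        (fun e => σ e = true ∧ v ∈ ends e)).card < ∑ _v ∈ (Finset.univ : Finset V), 1 :=
      Finset.sum_lt_sum (fun i _ => hle1 i)
        ⟨v0, Finset.mem_univ _, by have := hle1 v0; omega⟩
    rw [hhand, Finset.sum_const, smul_eq_mul, mul_one, Finset.card_univ] at hlt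
    omega
  -- the matching functions
  have hmex : ∀ v : V, ∃ e : E, (Finset.univ.filter
      (fun e => σ e = true ∧ v ∈ ends e)) = {e} := fun v => Finset.card_eq_one.mp (hone v)
  choose m hm using hmex
  have hmmem : ∀ v : V, σ (m v) = true ∧ v ∈ ends (m v) := by
    intro v
    have : m v ∈ Finset.univ.filter (fun e => σ e = true ∧ v ∈ ends e) := by
      rw [hm v]; exact Finset.mem_singleton_self _
    simpa using this
  have hmuniq : ∀ v (e : E), σ e = true → v ∈ ends e → e = m v := by
    intro v e h1 h2
    have : e ∈ Finset.univ.filter (fun e => σ e = true ∧ v ∈ ends e) := by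
      simp [h1, h2]
    rwa [hm v, Finset.mem_singleton] at this
  have hμex : ∀ v : V, ∃ w : V, w ≠ v ∧ ends (m v) = s(v, w) := by
    intro v
    obtain ⟨x, y, hxy⟩ := sym2_rep (ends (m v))
    have hne : x ≠ y := by
      have := hloop (m v); rw [hxy] at this; simpa [Sym2.isDiag_iff_proj_eq] using this
    rcases Sym2.mem_iff.mp (hxy ▸ (hmmem v).2) with h | h
    · exact ⟨y, fun hc => hne (h ▸ hc ▸ rfl), by rw [hxy, h]⟩
    · exact ⟨x, fun hc => hne (hc.trans h), by rw [hxy, h, Sym2.eq_swap]⟩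
  choose μ hμ using hμex
  -- build the context
  have hpos1 : ∀ v : V,
      1 ≤ (Finset.univ.filter (fun e => σ e = false ∧ v ∈ ends e)).card := by
    intro v
    have h1 := hNcut v
    have h2 := hone v
    omega
  have hpos2 : ∀ v : V,
      (Finset.univ.filter (fun e => σ e = false ∧ v ∈ ends e)).card ≤ 2 := by
    intro v
    have h1 := hdeg v
    have h2 := hone v
    omega
  have h2ec' : ∀ X : Set V, X.Nonempty → Xᶜ.Nonempty →
      2 ≤ (Finset.univ.filter (fun e => sgnCross X (ends e) = true)).card := by
    intro X h1 h2
    have h3 := h2ec X h1 h2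
    rwa [hc4] at h3
  set C : Ctx V E :=
    { ends := ends, sg := σ, m := m, mu := μ,
      hloop := hloop,
      hmσ := fun v => (hmmem v).1,
      hmends := fun v => (hμ v).2,
      hμne := fun v => (hμ v).1,
      hmuniq := hmuniq,
      hpos2 := hpos2,
      hpos1 := hpos1,
      hcut := hcut,
      h2ec := h2ec' } with hC
  by_cases hdig : ∀ v : V, ∃ g : E, σ g = false ∧ ends g = s(v, μ v)
  · -- every vertex lies in a digon
    right
    intro v
    obtain ⟨g, hg1, hg2⟩ := hdig v
    refine ⟨m v, g, ?_, ?_, (hmmem v).2, ?_⟩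
    · intro hc
      have h1 := (hmmem v).1
      rw [hc, hg1] at h1
      exact absurd h1 (by simp)
    · rw [(hμ v).2, hg2]
    · rw [(hmmem v).1, hg1]; decide
  · -- K4 case
    left
    push_neg at hdig
    obtain ⟨u, hu⟩ := hdig
    have hnd : C.NoDigon u := by
      intro g hg hge
      exact (hu g) hg hge
    obtain ⟨φ, ψ, hends, hsign⟩ := C.k4_of_nodigon u hnd
    refine ⟨φ, ψ, ∅, hends, ?_⟩
    intro e
    rw [cross_empty (ends e), Bool.xor_false]
    exact hsign e
end
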